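/- arXiv:1808.02419 — 8 statements merged into one kernel-verified Lean document; each statement's English description precedes it below -/
import Mathlib

section
/- Let λ ∈ ℝ, w ∈ ℂ and δ ∈ ℝ with 0 < δ < Im w. Then (1/(2πi)) ∫_ℝ 1 / ((λ − (x + iδ)) · ((x + iδ) − w)) dx = 1/(λ − w), where the integral over x ∈ ℝ is absolutely convergent. -/
open MeasureTheory Filter Topology

lemma sub_ne_of_im (x : ℝ) {c : ℂ} (hc : c.im ≠ 0) : (x : ℂ) - c ≠ 0 := by
  intro h
  apply hc
  have := congrArg Complex.im h
  simpa using this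

lemma one_add_ne (c : ℂ) (hc : c.im ≠ 0) {R : ℝ} (hR : R ≠ 0) :
    (1 : ℂ) + c * (R : ℂ)⁻¹ ≠ 0 := by
  intro h
  have h' : (1 : ℂ) + c * ((R⁻¹ : ℝ) : ℂ) = 0 := by rwa [Complex.ofReal_inv]
  have := congrArg Complex.im h'
  simp [Complex.add_im, Complex.mul_im] at this
  rcases this with h1 | h1
  · exact hc h1
  · exact hR h1

lemma aux_base (r : ℝ) {s : ℝ} (hs : s ≠ 0) :
    Integrable (fun x : ℝ => ((x - r) ^ 2 + s ^ 2)⁻¹) := by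
  have h1 : Integrable (fun x : ℝ => (s ^ 2)⁻¹ * (1 + (x / s) ^ 2)⁻¹) :=
    (integrable_inv_one_add_sq.comp_div hs).const_mul _
  have h2 : Integrable (fun x : ℝ => (x ^ 2 + s ^ 2)⁻¹) := by
    refine h1.congr (Filter.Eventually.of_forall fun x => ?_)
    show (s ^ 2)⁻¹ * (1 + (x / s) ^ 2)⁻¹ = (x ^ 2 + s ^ 2)⁻¹
    rw [← mul_inv]
    congr 1
    field_simp
    ring
  have h3 := ((measurePreserving_add_right volume (-r)).integrable_comp
    h2.aestronglyMeasurable).mpr h2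
  refine h3.congr (Filter.Eventually.of_forall fun x => ?_)
  simp [Function.comp, sub_eq_add_neg]

lemma aux_memL2 {c : ℂ} (hc : c.im ≠ 0) :
    MemLp (fun x : ℝ => ((x : ℂ) - c)⁻¹) 2 volume := by
  have hcont : Continuous fun x : ℝ => ((x : ℂ) - c)⁻¹ :=
    (Complex.continuous_ofReal.sub continuous_const).inv₀ fun x => sub_ne_of_im x hc
  rw [memLp_two_iff_integrable_sq_norm hcont.aestronglyMeasurable]
  have : (fun x : ℝ => ‖((x : ℂ) - c)⁻¹‖ ^ 2) =
      fun x : ℝ => ((x - c.re) ^ 2 + c.im ^ 2)⁻¹ := by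
    funext x
    rw [norm_inv, inv_pow, Complex.sq_norm, Complex.normSq_apply]
    congr 1
    simp
    ring
  rw [this]
  exact aux_base c.re hc

lemma aux_prod_integrable {a b : ℂ} (ha : a.im ≠ 0) (hb : b.im ≠ 0) :
    Integrable (fun x : ℝ => ((x : ℂ) - a)⁻¹ * ((x : ℂ) - b)⁻¹) := by
  have h := (aux_memL2 hb).smul (aux_memL2 ha) (r := 1)
  exact memLp_one_iff_integrable.mp h

lemma log_neg_of_im_neg {z : ℂ} (hz : z.im < 0) :
    Complex.log (-z) = Complex.log z + Real.pi * Complex.I := by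
  apply Complex.ext
  · simp [Complex.log_re]
  · simp [Complex.log_im, Complex.arg_neg_eq_arg_add_pi_of_im_neg hz]

lemma log_neg_of_im_pos {z : ℂ} (hz : 0 < z.im) :
    Complex.log (-z) = Complex.log z - Real.pi * Complex.I := by
  apply Complex.ext
  · simp [Complex.log_re]
  · simp [Complex.log_im, Complex.arg_neg_eq_arg_sub_pi_of_im_pos hz]

lemma log_tend (c : ℂ) :
    Tendsto (fun R : ℝ => Complex.log (1 + c * (R : ℂ)⁻¹)) atTop (𝓝 0) := by
  have h0 : Tendsto (fun R : ℝ => ((R : ℂ))⁻¹) atTop (𝓝 0) := by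
    have := (Complex.continuous_ofReal.tendsto (0 : ℝ)).comp tendsto_inv_atTop_zero
    simpa [Function.comp_def, Complex.ofReal_inv] using this
  have h1 : Tendsto (fun R : ℝ => (1 : ℂ) + c * (R : ℂ)⁻¹) atTop (𝓝 1) := by
    have := (h0.const_mul c).const_add (1 : ℂ)
    simpa using this
  have := h1.clog (by simp [Complex.mem_slitPlane_iff])
  simpa [Complex.log_one] using this

lemma key_lemma {a b : ℂ} (ha : a.im < 0) (hb : 0 < b.im) :
    Integrable (fun x : ℝ => ((x : ℂ) - a)⁻¹ * ((x : ℂ) - b)⁻¹) ∧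
    ∫ x : ℝ, ((x : ℂ) - a)⁻¹ * ((x : ℂ) - b)⁻¹ =
      2 * Real.pi * Complex.I / (b - a) := by
  have ha' : a.im ≠ 0 := ne_of_lt ha
  have hb' : b.im ≠ 0 := ne_of_gt hb
  have hba : b - a ≠ 0 := by
    intro h
    have := congrArg Complex.im h
    simp [Complex.sub_im] at this
    linarith
  have hprod := aux_prod_integrable ha' hb'
  refine ⟨hprod, ?_⟩
  set g : ℝ → ℂ := fun x => ((x : ℂ) - b)⁻¹ - ((x : ℂ) - a)⁻¹ with hgdef
  have hgprod : ∀ x : ℝ, g x = (b - a) * (((x : ℂ) - a)⁻¹ * ((x : ℂ) - b)⁻¹) := by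
    intro x
    have hxa := sub_ne_of_im x ha'
    have hxb := sub_ne_of_im x hb'
    rw [hgdef]
    simp only
    rw [inv_sub_inv hxb hxa, show (x : ℂ) - a - ((x : ℂ) - b) = b - a by ring,
      div_eq_mul_inv, mul_inv]
    ring
  have hg_int : Integrable g := by
    have := hprod.const_mul (b - a)
    exact this.congr (Filter.Eventually.of_forall fun x => (hgprod x).symm)
  have hderiv : ∀ x : ℝ, HasDerivAt
      (fun y : ℝ => Complex.log ((y : ℂ) - b) - Complex.log ((y : ℂ) - a)) (g x) x := by
    intro x
    have h1 : HasDerivAt (fun z : ℂ => Complex.log (z - b)) (((x : ℂ) - b)⁻¹) (x : ℂ) := by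
      have h0 : HasDerivAt (fun z : ℂ => z - b) 1 (x : ℂ) := (hasDerivAt_id _).sub_const b
      have hm : (x : ℂ) - b ∈ Complex.slitPlane := by
        rw [Complex.mem_slitPlane_iff]
        right
        simpa using hb'
      have := (Complex.hasDerivAt_log hm).comp (x : ℂ) h0
      simpa [Function.comp_def] using this
    have h2 : HasDerivAt (fun z : ℂ => Complex.log (z - a)) (((x : ℂ) - a)⁻¹) (x : ℂ) := by
      have h0 : HasDerivAt (fun z : ℂ => z - a) 1 (x : ℂ) := (hasDerivAt_id _).sub_const a
      have hm : (x : ℂ) - a ∈ Complex.slitPlane := by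
        rw [Complex.mem_slitPlane_iff]
        right
        simpa using ha'
      have := (Complex.hasDerivAt_log hm).comp (x : ℂ) h0
      simpa [Function.comp_def] using this
    exact (h1.comp_ofReal).sub (h2.comp_ofReal)
  set F : ℝ → ℂ := fun R =>
    (Complex.log ((R : ℂ) - b) - Complex.log ((R : ℂ) - a)) -
      (Complex.log (((-R : ℝ) : ℂ) - b) - Complex.log (((-R : ℝ) : ℂ) - a)) with hFdef
  have hFTC : ∀ R : ℝ, ∫ x in (-R)..R, g x = F R := by
    intro R
    exact intervalIntegral.integral_eq_sub_of_hasDerivAt (fun x _ => hderiv x)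
      hg_int.intervalIntegrable
  have h2 : Tendsto (fun R : ℝ => ∫ x in (-R)..R, g x) atTop (𝓝 (∫ x : ℝ, g x)) :=
    intervalIntegral_tendsto_integral hg_int tendsto_neg_atTop_atBot tendsto_id
  have hlim : Tendsto (fun R : ℝ =>
      (Complex.log (1 + (-b) * (R : ℂ)⁻¹) - Complex.log (1 + (-a) * (R : ℂ)⁻¹)
        - Complex.log (1 + b * (R : ℂ)⁻¹) + Complex.log (1 + a * (R : ℂ)⁻¹))
        + 2 * Real.pi * Complex.I) atTop (𝓝 (2 * Real.pi * Complex.I)) := by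
    have := ((((log_tend (-b)).sub (log_tend (-a))).sub (log_tend b)).add
      (log_tend a)).add_const (2 * (Real.pi : ℂ) * Complex.I)
    simpa using this
  have hev : (fun R : ℝ =>
      (Complex.log (1 + (-b) * (R : ℂ)⁻¹) - Complex.log (1 + (-a) * (R : ℂ)⁻¹)
        - Complex.log (1 + b * (R : ℂ)⁻¹) + Complex.log (1 + a * (R : ℂ)⁻¹))
        + 2 * Real.pi * Complex.I) =ᶠ[atTop] F := by
    filter_upwards [eventually_gt_atTop (0 : ℝ)] with R hR
    have hRne : R ≠ 0 := ne_of_gt hR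
    have hRC : ((R : ℝ) : ℂ) ≠ 0 := Complex.ofReal_ne_zero.mpr hRne
    have e1 : (R : ℂ) - b = (R : ℝ) * (1 + (-b) * (R : ℂ)⁻¹) := by
      field_simp
      ring
    have e2 : (R : ℂ) - a = (R : ℝ) * (1 + (-a) * (R : ℂ)⁻¹) := by
      field_simp
      ring
    have e3 : (R : ℂ) + b = (R : ℝ) * (1 + b * (R : ℂ)⁻¹) := by
      field_simp
    have e4 : (R : ℂ) + a = (R : ℝ) * (1 + a * (R : ℂ)⁻¹) := by
      field_simp
    have l1 : Complex.log ((R : ℂ) - b) =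
        Real.log R + Complex.log (1 + (-b) * (R : ℂ)⁻¹) := by
      rw [e1, Complex.log_ofReal_mul hR (one_add_ne (-b) (by simpa using hb') hRne)]
    have l2 : Complex.log ((R : ℂ) - a) =
        Real.log R + Complex.log (1 + (-a) * (R : ℂ)⁻¹) := by
      rw [e2, Complex.log_ofReal_mul hR (one_add_ne (-a) (by simpa using ha') hRne)]
    have l3 : Complex.log (((-R : ℝ) : ℂ) - b) =
        Real.log R + Complex.log (1 + b * (R : ℂ)⁻¹) - Real.pi * Complex.I := by
      rw [show ((-R : ℝ) : ℂ) - b = -((R : ℂ) + b) by push_cast; ring,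
        log_neg_of_im_pos (by simpa using hb), e3,
        Complex.log_ofReal_mul hR (one_add_ne b hb' hRne)]
    have l4 : Complex.log (((-R : ℝ) : ℂ) - a) =
        Real.log R + Complex.log (1 + a * (R : ℂ)⁻¹) + Real.pi * Complex.I := by
      rw [show ((-R : ℝ) : ℂ) - a = -((R : ℂ) + a) by push_cast; ring,
        log_neg_of_im_neg (by simpa using ha), e4,
        Complex.log_ofReal_mul hR (one_add_ne a ha' hRne)]
    rw [hFdef]
    simp only
    rw [l1, l2, l3, l4]
    ring
  have hF : Tendsto F atTop (𝓝 (2 * Real.pi * Complex.I)) := Tendsto.congr' hev hlim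
  have hgval : ∫ x : ℝ, g x = 2 * Real.pi * Complex.I :=
    tendsto_nhds_unique (h2.congr hFTC) hF
  have hrw : (fun x : ℝ => ((x : ℂ) - a)⁻¹ * ((x : ℂ) - b)⁻¹) =
      fun x : ℝ => (b - a)⁻¹ * g x := by
    funext x
    rw [hgprod x, ← mul_assoc, inv_mul_cancel₀ hba, one_mul]
  rw [hrw, integral_const_mul, hgval, div_eq_inv_mul]

/-- contour integral over the horizontal line `ℝ + iδ` with `0 < δ < Im w`:
`(1/(2πi)) ∫_ℝ dx / ((λ − (x+iδ))((x+iδ) − w)) = 1/(λ − w)`, absolutely convergent. -/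
theorem line_contour_integral (lam : ℝ) (w : ℂ) (δ : ℝ) (h1 : 0 < δ) (h2 : δ < w.im) :
    Integrable (fun x : ℝ =>
        1 / (((lam : ℂ) - ((x : ℂ) + (δ : ℂ) * Complex.I)) *
          (((x : ℂ) + (δ : ℂ) * Complex.I) - w))) ∧
    (1 / (2 * (Real.pi : ℂ) * Complex.I)) *
        ∫ x : ℝ,
          1 / (((lam : ℂ) - ((x : ℂ) + (δ : ℂ) * Complex.I)) *
            (((x : ℂ) + (δ : ℂ) * Complex.I) - w)) =
      1 / ((lam : ℂ) - w) := by
  have ha : ((lam : ℂ) - (δ : ℂ) * Complex.I).im < 0 := by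
    simp only [Complex.sub_im, Complex.ofReal_im, Complex.mul_im, Complex.ofReal_re,
      Complex.I_im, Complex.I_re, Complex.ofReal_im]
    simp
    linarith
  have hb : 0 < (w - (δ : ℂ) * Complex.I).im := by
    simp only [Complex.sub_im, Complex.mul_im, Complex.ofReal_re, Complex.I_im,
      Complex.I_re, Complex.ofReal_im]
    simp
    linarith
  obtain ⟨hi, hv⟩ := key_lemma ha hb
  have hfe : (fun x : ℝ =>
      1 / (((lam : ℂ) - ((x : ℂ) + (δ : ℂ) * Complex.I)) *
        (((x : ℂ) + (δ : ℂ) * Complex.I) - w))) =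
      fun x : ℝ => -(((x : ℂ) - ((lam : ℂ) - (δ : ℂ) * Complex.I))⁻¹ *
        ((x : ℂ) - (w - (δ : ℂ) * Complex.I))⁻¹) := by
    funext x
    rw [show ((lam : ℂ) - ((x : ℂ) + (δ : ℂ) * Complex.I)) *
        (((x : ℂ) + (δ : ℂ) * Complex.I) - w) =
        -(((x : ℂ) - ((lam : ℂ) - (δ : ℂ) * Complex.I)) *
          ((x : ℂ) - (w - (δ : ℂ) * Complex.I))) by ring]
    rw [one_div, inv_neg, mul_inv]
  constructor
  · rw [hfe]
    exact hi.neg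
  · rw [hfe, integral_neg, hv]
    have hwl : w - (lam : ℂ) ≠ 0 := by
      intro h
      have := congrArg Complex.im h
      simp at this
      linarith
    have hlw : (lam : ℂ) - w ≠ 0 := by
      intro h
      have := congrArg Complex.im h
      simp at this
      linarith
    rw [show w - (δ : ℂ) * Complex.I - ((lam : ℂ) - (δ : ℂ) * Complex.I) = w - lam by ring]
    have hπ : (Real.pi : ℂ) ≠ 0 := Complex.ofReal_ne_zero.mpr Real.pi_ne_zero
    field_simp
    ring
end

section
/- For all x, y ∈ ℝ, T(x,y) = (1/(2π)²) ∫_ℝ ∫_ℝ e^{-(1/4)(λ² + (s+i)²)} e^{-i(xλ − y(s+i))} / (i(λ − (s+i))) ds dλ, where the double integral over (λ, s) ∈ ℝ² is absolutely convergent. -/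
open MeasureTheory

noncomputable section TkerAux
open Set Complex Filter


def Kc : ℝ := 2 * Real.sqrt Real.pi

lemma Kc_nonneg : 0 ≤ Kc := by unfold Kc; positivity

lemma Kc_sq : Kc ^ 2 = 4 * Real.pi := by
  rw [Kc, mul_pow, Real.sq_sqrt Real.pi_pos.le]; norm_num

lemma sqrt_four_pi : ((Real.pi : ℂ) / -(-(1/4 : ℂ))) ^ (1/2 : ℂ) = (Kc : ℂ) := by
  have h4 : ((Real.pi : ℂ) / -(-(1/4 : ℂ))) = ((4 * Real.pi : ℝ) : ℂ) := by push_cast; ring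
  have h2 : (1/2 : ℂ) = ((1/2 : ℝ) : ℂ) := by norm_num
  rw [h4, h2, ← Complex.ofReal_cpow (by positivity)]
  norm_cast
  rw [← Real.sqrt_eq_rpow, Kc,
    Real.sqrt_mul (by norm_num : (0:ℝ) ≤ 4),
    show Real.sqrt 4 = 2 by rw [show (4:ℝ) = 2^2 by norm_num, Real.sqrt_sq (by norm_num)]]

lemma gauss (c d : ℂ) :
    ∫ t : ℝ, Complex.exp ((-(1/4) : ℂ) * (t:ℂ) ^ 2 + c * t + d)
      = (Kc : ℂ) * Complex.exp (c ^ 2 + d) := by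
  rw [integral_cexp_quadratic (b := (-(1/4) : ℂ)) (by norm_num) c d, sqrt_four_pi,
    show d - c ^ 2 / (4 * (-(1/4) : ℂ)) = c ^ 2 + d by ring]

lemma exp_Ioi_integrable {a : ℂ} (ha : 0 < a.re) :
    IntegrableOn (fun u : ℝ => Complex.exp (-(a * u))) (Ioi 0) := by
  apply Integrable.mono' (g := fun u : ℝ => Real.exp (-a.re * u))
  · exact exp_neg_integrableOn_Ioi 0 ha
  · exact (Complex.continuous_exp.comp (by fun_prop)).aestronglyMeasurable
  · filter_upwards with u
    rw [Complex.norm_exp]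
    simp [Complex.mul_re]

lemma exp_Ioi {a : ℂ} (ha : 0 < a.re) :
    ∫ u in Ioi (0:ℝ), Complex.exp (-(a * u)) = a⁻¹ := by
  have ha' : a ≠ 0 := fun h => by simp [h] at ha
  have hderiv : ∀ u : ℝ, HasDerivAt (fun v : ℝ => -a⁻¹ * Complex.exp (-(a * v)))
      (Complex.exp (-(a * u))) u := by
    intro u
    have h1 := ((Complex.hasDerivAt_exp (-(a * (u:ℂ)))).comp (u:ℂ)
      (((hasDerivAt_id (u:ℂ)).const_mul a).neg)).const_mul (-a⁻¹)
    simp only [Function.comp_def, id] at h1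
    have h2 := h1.comp_ofReal
    convert h2 using 1
    · rfl
    · rw [mul_one, mul_neg, neg_mul_neg, mul_comm (cexp _) a, ← mul_assoc, inv_mul_cancel₀ ha', one_mul]
  have htend : Tendsto (fun u : ℝ => -a⁻¹ * Complex.exp (-(a * u))) atTop (nhds 0) := by
    refine squeeze_zero_norm (a := fun u => ‖a⁻¹‖ * Real.exp (-(a.re * u))) (fun u => ?_) ?_
    · rw [norm_mul, norm_neg, Complex.norm_exp]
      simp [Complex.mul_re]
    · rw [show (0:ℝ) = ‖a⁻¹‖ * 0 by ring]
      exact (Real.tendsto_exp_neg_atTop_nhds_zero.comp (tendsto_id.const_mul_atTop ha)).const_mul _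
  have := integral_Ioi_of_hasDerivAt_of_tendsto
    (f := fun v : ℝ => -a⁻¹ * Complex.exp (-(a * v)))
    ((hderiv 0).continuousAt.continuousWithinAt)
    (fun u _ => hderiv u) (exp_Ioi_integrable ha) htend
  rw [this]
  simp

/-- first factor -/
def Af (x lam : ℝ) : ℂ := Complex.exp (((-(1/4) * lam^2 : ℝ) : ℂ) + ((-(x*lam) : ℝ) : ℂ) * I)
/-- second factor -/
def Bf (y s : ℝ) : ℂ := Complex.exp ((((1 - s^2)/4 - y : ℝ) : ℂ) + ((y*s - s/2 : ℝ) : ℂ) * I)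
/-- denominator -/
def Df (lam s : ℝ) : ℂ := 1 + ((lam : ℂ) - (s : ℂ)) * I
/-- inner Fubini integrand -/
def phi (y lam s u : ℝ) : ℂ :=
  Complex.exp ((((1 - s^2)/4 - (y+u) : ℝ) : ℂ) + (((y+u)*s - s/2 - lam*u : ℝ) : ℂ) * I)
/-- after the s-integration -/
def psi (y lam u : ℝ) : ℂ :=
  Complex.exp (((-(y+u)^2 : ℝ) : ℂ) + ((-(lam*u) : ℝ) : ℂ) * I)

lemma norm_cexp_mix (r t : ℝ) : ‖Complex.exp ((r : ℂ) + (t : ℂ) * I)‖ = Real.exp r := by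
  rw [Complex.norm_exp]
  simp

lemma Df_re (lam s : ℝ) : (Df lam s).re = 1 := by simp [Df]

lemma Df_re_pos (lam s : ℝ) : 0 < (Df lam s).re := by rw [Df_re]; norm_num

lemma one_le_norm_Df (lam s : ℝ) : 1 ≤ ‖Df lam s‖ := by
  calc (1:ℝ) = (Df lam s).re := (Df_re lam s).symm
    _ ≤ |(Df lam s).re| := le_abs_self _
    _ ≤ ‖Df lam s‖ := by exact Complex.abs_re_le_norm _

lemma hpt (x y lam s : ℝ) :
    Complex.exp (-(1 / 4 : ℂ) * ((lam : ℂ) ^ 2 + ((s : ℂ) + Complex.I) ^ 2)) *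
        Complex.exp (-Complex.I * ((x : ℂ) * (lam : ℂ) - (y : ℂ) * ((s : ℂ) + Complex.I))) /
        (Complex.I * ((lam : ℂ) - ((s : ℂ) + Complex.I))) =
      Af x lam * (Bf y s / Df lam s) := by
  simp only [Af, Bf, Df, ← mul_div_assoc]
  rw [← Complex.exp_add, ← Complex.exp_add]
  congr 1
  · congr 1
    push_cast
    linear_combination ((y:ℂ) - 1/4) * Complex.I_sq
  · linear_combination (-1 : ℂ) * Complex.I_sq

lemma hBD (y lam s : ℝ) : Bf y s / Df lam s = ∫ u in Ioi (0:ℝ), phi y lam s u := by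
  rw [div_eq_mul_inv, ← exp_Ioi (Df_re_pos lam s), ← integral_const_mul]
  refine integral_congr_ae (.of_forall fun u => ?_)
  simp only [Bf, phi, Df, ← Complex.exp_add]
  congr 1
  push_cast
  ring

lemma int_phi (y lam : ℝ) :
    Integrable (Function.uncurry fun s u => phi y lam s u)
      (volume.prod (volume.restrict (Ioi (0:ℝ)))) := by
  apply Integrable.mono'
    (g := fun q : ℝ × ℝ => (Real.exp (1/4 - y) * Real.exp (-(1/4) * q.1^2)) * Real.exp (-1 * q.2))
  · exact ((integrable_exp_neg_mul_sq (by norm_num)).const_mul _).mul_prod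
      (exp_neg_integrableOn_Ioi 0 one_pos)
  · have : Continuous fun q : ℝ × ℝ => phi y lam q.1 q.2 := by unfold phi; fun_prop
    exact this.aestronglyMeasurable
  · filter_upwards with q
    simp only [Function.uncurry, phi]
    rw [norm_cexp_mix, ← Real.exp_add, ← Real.exp_add]
    exact le_of_eq (by congr 1; ring)

lemma s_gauss (y lam u : ℝ) : ∫ s : ℝ, phi y lam s u = (Kc : ℂ) * psi y lam u := by
  set c : ℂ := (((y+u : ℝ) : ℂ) - 1/2) * I with hc
  set d : ℂ := ((1/4 - (y+u) : ℝ) : ℂ) + ((-(lam*u) : ℝ) : ℂ) * I with hd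
  calc ∫ s : ℝ, phi y lam s u
      = ∫ t : ℝ, Complex.exp ((-(1/4) : ℂ) * (t:ℂ) ^ 2 + c * t + d) := by
        refine integral_congr_ae (.of_forall fun s => ?_)
        simp only [phi, hc, hd]
        congr 1
        push_cast
        ring
    _ = (Kc : ℂ) * Complex.exp (c ^ 2 + d) := gauss c d
    _ = (Kc : ℂ) * psi y lam u := by
        rw [psi]
        congr 1
        rw [hc, hd, mul_pow, Complex.I_sq]
        push_cast
        ring

lemma inner_eq (x y lam : ℝ) :
    ∫ s : ℝ, Af x lam * (Bf y s / Df lam s)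
      = ∫ u in Ioi (0:ℝ), Af x lam * ((Kc : ℂ) * psi y lam u) := by
  rw [integral_const_mul]
  simp only [hBD y lam]
  rw [integral_integral_swap (int_phi y lam)]
  simp only [s_gauss]
  rw [← integral_const_mul]

lemma int_exp_shift (y : ℝ) : Integrable (fun u : ℝ => Real.exp (-(u + y)^2)) := by
  have h := (integrable_cexp_quadratic' (b := (-1 : ℂ)) (by norm_num)
    ((-(2*y) : ℝ) : ℂ) ((-(y^2) : ℝ) : ℂ)).norm
  refine h.congr (.of_forall fun u => ?_)
  dsimp only
  rw [Complex.norm_exp]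
  have : ((-1 : ℂ) * (u:ℂ) ^ 2 + ((-(2*y) : ℝ) : ℂ) * (u:ℂ) + ((-(y^2) : ℝ) : ℂ)).re
      = -(u + y)^2 := by
    simp [Complex.add_re, Complex.mul_re, ← Complex.ofReal_pow]
    ring
  rw [this]

lemma int_chi (x y : ℝ) :
    Integrable (Function.uncurry fun lam u => Af x lam * ((Kc : ℂ) * psi y lam u))
      (volume.prod (volume.restrict (Ioi (0:ℝ)))) := by
  apply Integrable.mono'
    (g := fun q : ℝ × ℝ => Real.exp (-(1/4) * q.1^2) * (Kc * Real.exp (-(q.2 + y)^2)))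
  · exact (integrable_exp_neg_mul_sq (by norm_num)).mul_prod
      (((int_exp_shift y).integrableOn).const_mul Kc)
  · have : Continuous fun q : ℝ × ℝ => Af x q.1 * ((Kc : ℂ) * psi y q.2 q.1) := by
      unfold Af psi; fun_prop
    exact (by unfold Af psi; fun_prop :
      Continuous fun q : ℝ × ℝ => Af x q.1 * ((Kc : ℂ) * psi y q.1 q.2)).aestronglyMeasurable
  · filter_upwards with q
    simp only [Function.uncurry, Af, psi]
    rw [norm_mul, norm_mul, norm_cexp_mix, norm_cexp_mix, Complex.norm_real,
      Real.norm_eq_abs, _root_.abs_of_nonneg Kc_nonneg]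
    rw [add_comm y q.2]

lemma lam_gauss (x y u : ℝ) :
    ∫ lam : ℝ, Af x lam * ((Kc : ℂ) * psi y lam u)
      = (Kc : ℂ) ^ 2 * ((Real.exp (-(x+u)^2 - (y+u)^2) : ℝ) : ℂ) := by
  set c : ℂ := ((-(x+u) : ℝ) : ℂ) * I with hc
  set d : ℂ := ((-(y+u)^2 : ℝ) : ℂ) with hd
  calc ∫ lam : ℝ, Af x lam * ((Kc : ℂ) * psi y lam u)
      = ∫ lam : ℝ, (Kc : ℂ) * Complex.exp ((-(1/4) : ℂ) * (lam:ℂ) ^ 2 + c * lam + d) := by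
        refine integral_congr_ae (.of_forall fun lam => ?_)
        simp only [Af, psi]
        rw [mul_left_comm, ← Complex.exp_add]
        congr 1
        simp only [hc, hd]
        push_cast
        ring
    _ = (Kc : ℂ) * ((Kc : ℂ) * Complex.exp (c ^ 2 + d)) := by rw [integral_const_mul, gauss]
    _ = (Kc : ℂ) ^ 2 * ((Real.exp (-(x+u)^2 - (y+u)^2) : ℝ) : ℂ) := by
        rw [← mul_assoc, ← sq]
        congr 1
        rw [hc, hd, mul_pow, Complex.I_sq, Complex.ofReal_exp]
        congr 1
        push_cast
        ring

end TkerAux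

/-- The kernel `T(x,y) = (1/π) ∫₀^∞ e^{-(x+u)²} e^{-(y+u)²} du`. -/
noncomputable def Tker (x y : ℝ) : ℝ :=
  (1 / Real.pi) * ∫ u in Set.Ioi (0 : ℝ), Real.exp (-(x + u) ^ 2) * Real.exp (-(y + u) ^ 2)

section TkerAux2
open Set Complex Filter

lemma key (x y : ℝ) :
    ∫ lam : ℝ, ∫ s : ℝ, Af x lam * (Bf y s / Df lam s)
      = (Kc : ℂ) ^ 2 * ((Real.pi * Tker x y : ℝ) : ℂ) := by
  simp only [inner_eq]
  rw [integral_integral_swap (int_chi x y)]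
  simp only [lam_gauss]
  rw [integral_const_mul,
    show (∫ u in Ioi (0:ℝ), ((Real.exp (-(x+u)^2 - (y+u)^2) : ℝ) : ℂ))
      = ((∫ u in Ioi (0:ℝ), Real.exp (-(x+u)^2 - (y+u)^2) : ℝ) : ℂ) from integral_ofReal]
  congr 2
  rw [Tker, ← mul_assoc, mul_one_div, div_self Real.pi_ne_zero, one_mul]
  refine integral_congr_ae (.of_forall fun u => ?_)
  dsimp only
  rw [← Real.exp_add, sub_eq_add_neg]

end TkerAux2

/-- double contour integral representation of the kernel `T(x,y)`,
with the inner contour the horizontal line `ℝ + i` parametrized by `w = s + i`. -/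
theorem Tker_double_contour (x y : ℝ) :
    Integrable (fun p : ℝ × ℝ =>
        Complex.exp (-(1 / 4 : ℂ) * ((p.1 : ℂ) ^ 2 + ((p.2 : ℂ) + Complex.I) ^ 2)) *
          Complex.exp (-Complex.I * ((x : ℂ) * (p.1 : ℂ) - (y : ℂ) * ((p.2 : ℂ) + Complex.I))) /
          (Complex.I * ((p.1 : ℂ) - ((p.2 : ℂ) + Complex.I)))) ∧
    ((Tker x y : ℝ) : ℂ) =
      ((1 / (2 * Real.pi) ^ 2 : ℝ) : ℂ) *
        ∫ lam : ℝ, ∫ s : ℝ,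
          Complex.exp (-(1 / 4 : ℂ) * ((lam : ℂ) ^ 2 + ((s : ℂ) + Complex.I) ^ 2)) *
            Complex.exp (-Complex.I * ((x : ℂ) * (lam : ℂ) - (y : ℂ) * ((s : ℂ) + Complex.I))) /
            (Complex.I * ((lam : ℂ) - ((s : ℂ) + Complex.I))) := by
  constructor
  · simp only [hpt x y]
    apply Integrable.mono'
      (g := fun p : ℝ × ℝ =>
        Real.exp (-(1/4) * p.1^2) * (Real.exp (1/4 - y) * Real.exp (-(1/4) * p.2^2)))
    · exact (integrable_exp_neg_mul_sq (by norm_num)).mul_prod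
        ((integrable_exp_neg_mul_sq (by norm_num)).const_mul _)
    · have hc : Continuous fun p : ℝ × ℝ => Af x p.1 * (Bf y p.2 / Df p.1 p.2) := by
        apply Continuous.mul (by unfold Af; fun_prop)
        apply Continuous.div (by unfold Bf; fun_prop) (by unfold Df; fun_prop)
        intro p h
        have h1 := Df_re p.1 p.2
        rw [h] at h1
        simp at h1
      exact hc.aestronglyMeasurable
    · filter_upwards with p
      simp only [Af, Bf]
      rw [norm_mul, norm_div, norm_cexp_mix, norm_cexp_mix]
      calc Real.exp (-(1/4) * p.1^2) * (Real.exp ((1 - p.2^2)/4 - y) / ‖Df p.1 p.2‖)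
            ≤ Real.exp (-(1/4) * p.1^2) * Real.exp ((1 - p.2^2)/4 - y) := by
              refine mul_le_mul_of_nonneg_left ?_ (Real.exp_nonneg _)
              exact div_le_self (Real.exp_nonneg _) (one_le_norm_Df _ _)
        _ = _ := by
              rw [← Real.exp_add, ← Real.exp_add, ← Real.exp_add]
              congr 1
              ring
  · simp only [hpt x y]
    rw [key x y]
    have h2 : ((Kc : ℂ)) ^ 2 = ((4 * Real.pi : ℝ) : ℂ) := by
      rw [show ((Kc : ℂ)) ^ 2 = ((Kc ^ 2 : ℝ) : ℂ) by push_cast; ring, Kc_sq]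
    rw [h2, show ((1 / (2 * Real.pi) ^ 2 : ℝ) : ℂ) *
        (((4 * Real.pi : ℝ) : ℂ) * ((Real.pi * Tker x y : ℝ) : ℂ))
        = (((1 / (2 * Real.pi) ^ 2) * (4 * Real.pi * (Real.pi * Tker x y)) : ℝ) : ℂ) by
      push_cast; ring]
    norm_cast
    field_simp
    ring
end

section
/- Let γ ∈ (0,1) and t ≠ 0, and set Π := { z ∈ ℂ : |Im z| < √(−2 ln γ)/|t| }. Then for every z ∈ Π the complex number 1 − γ e^{-t²z²/2} does not lie in the closed negative real half-line (−∞, 0], and the function z ↦ −Log(1 − γ e^{-t²z²/2}), defined with the principal branch Log of the complex logarithm, is analytic on the open horizontal strip Π. -/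
set_option maxHeartbeats 1000000


/-- `1 − γ e^{-t²z²/2}` avoids `(−∞,0]` on the strip
`|Im z| < √(−2 ln γ)/|t|`, and `z ↦ −Log(1 − γ e^{-t²z²/2})` is analytic there. -/
theorem log_kernel_analytic (γ t : ℝ) (hγ : γ ∈ Set.Ioo (0 : ℝ) 1) (ht : t ≠ 0) :
    (∀ z ∈ {z : ℂ | |z.im| < Real.sqrt (-2 * Real.log γ) / |t|},
        (1 - (γ : ℂ) * Complex.exp (-(t : ℂ) ^ 2 * z ^ 2 / 2)) ∈ Complex.slitPlane) ∧
    AnalyticOnNhd ℂ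
      (fun z : ℂ => -Complex.log (1 - (γ : ℂ) * Complex.exp (-(t : ℂ) ^ 2 * z ^ 2 / 2)))
      {z : ℂ | |z.im| < Real.sqrt (-2 * Real.log γ) / |t|} := by
  obtain ⟨hγ0, hγ1⟩ := hγ
  have hlogneg : 0 < -2 * Real.log γ := by
    have := Real.log_neg hγ0 hγ1
    linarith
  have key : ∀ z ∈ {z : ℂ | |z.im| < Real.sqrt (-2 * Real.log γ) / |t|},
      (1 - (γ : ℂ) * Complex.exp (-(t : ℂ) ^ 2 * z ^ 2 / 2)) ∈ Complex.slitPlane := by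
    intro z hz
    have hz' : |z.im| < Real.sqrt (-2 * Real.log γ) / |t| := hz
    -- modulus of the exponential term < 1
    have habs : ‖(γ : ℂ) * Complex.exp (-(t : ℂ) ^ 2 * z ^ 2 / 2)‖ < 1 := by
      rw [norm_mul, Complex.norm_exp, Complex.norm_real, Real.norm_eq_abs, abs_of_pos hγ0]
      have hre : (-(t : ℂ) ^ 2 * z ^ 2 / 2).re = t ^ 2 * (z.im ^ 2 - z.re ^ 2) / 2 := by
        simp [Complex.div_re, Complex.mul_re, Complex.mul_im, pow_two]
        ring
      have h1 : t ^ 2 * z.im ^ 2 < -2 * Real.log γ := by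
        have ht' : (0 : ℝ) < |t| := abs_pos.mpr ht
        have h2 : |z.im| * |t| < Real.sqrt (-2 * Real.log γ) := by
          rw [← lt_div_iff₀ ht']; exact hz'
        have h3 : (|z.im| * |t|) ^ 2 < Real.sqrt (-2 * Real.log γ) ^ 2 := by
          apply pow_lt_pow_left₀ h2 (by positivity)
          norm_num
        rwa [Real.sq_sqrt hlogneg.le, mul_pow, sq_abs, sq_abs, mul_comm] at h3
      have h4 : (-(t : ℂ) ^ 2 * z ^ 2 / 2).re < -Real.log γ := by
        rw [hre]
        nlinarith [sq_nonneg (t * z.re)]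
      have h5 : Real.exp ((-(t : ℂ) ^ 2 * z ^ 2 / 2).re) < Real.exp (-Real.log γ) :=
        Real.exp_lt_exp.mpr h4
      rw [Real.exp_neg, Real.exp_log hγ0] at h5
      have h6 := mul_lt_mul_of_pos_left h5 hγ0
      rwa [mul_inv_cancel₀ hγ0.ne'] at h6
    left
    have hrele : ((γ : ℂ) * Complex.exp (-(t : ℂ) ^ 2 * z ^ 2 / 2)).re < 1 :=
      lt_of_le_of_lt (Complex.re_le_norm _) habs
    simp only [Complex.sub_re, Complex.one_re]
    linarith
  refine ⟨key, ?_⟩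
  intro z hz
  have hinner : AnalyticAt ℂ (fun z : ℂ => 1 - (γ : ℂ) * Complex.exp (-(t : ℂ) ^ 2 * z ^ 2 / 2)) z := by
    apply AnalyticAt.sub analyticAt_const
    refine analyticAt_const.mul (analyticAt_cexp.comp ?_)
    have h7 : AnalyticAt ℂ (fun w : ℂ => w ^ 2 * (-(t : ℂ) ^ 2 / 2)) z :=
      (analyticAt_id.pow 2).mul analyticAt_const
    exact h7.congr (Filter.Eventually.of_forall fun w => by ring)
  exact (hinner.clog (key z hz)).neg
end

section
/- Let γ ∈ (0,1) and t ≠ 0. Then ∫_ℝ −ln(1 − γ e^{-t²x²/2}) dx = (√(2π)/|t|) · Σ_{k=1}^∞ γ^k / k^{3/2}, where the series on the right (equal to the polylogarithm Li_{3/2}(γ)) converges absolutely. -/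
open MeasureTheory

/-- total integral identity
`∫_ℝ −ln(1 − γ e^{-t²x²/2}) dx = (√(2π)/|t|) Li_{3/2}(γ)`. -/
theorem log_kernel_total_integral (γ t : ℝ) (hγ : γ ∈ Set.Ioo (0 : ℝ) 1) (ht : t ≠ 0) :
    Summable (fun k : ℕ => γ ^ (k + 1) / ((k + 1 : ℝ)) ^ ((3 : ℝ) / 2)) ∧
    ∫ x : ℝ, -Real.log (1 - γ * Real.exp (-t ^ 2 * x ^ 2 / 2)) =
      (Real.sqrt (2 * Real.pi) / |t|) *
        ∑' k : ℕ, γ ^ (k + 1) / ((k + 1 : ℝ)) ^ ((3 : ℝ) / 2) := by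
  obtain ⟨hγ0, hγ1⟩ := hγ
  have ht2 : (0:ℝ) < t ^ 2 := by positivity
  have htabs : (0:ℝ) < |t| := abs_pos.mpr ht
  set a : ℕ → ℝ := fun k => γ ^ (k + 1) / ((k + 1 : ℝ)) ^ ((3 : ℝ) / 2) with ha
  -- summability
  have hsum : Summable a := by
    refine Summable.of_nonneg_of_le (fun n => by positivity) (fun n => ?_)
      ((summable_geometric_of_lt_one hγ0.le hγ1).mul_left γ)
    have h1 : (1:ℝ) ≤ ((n:ℝ) + 1) ^ ((3:ℝ)/2) :=
      Real.one_le_rpow (by exact_mod_cast Nat.one_le_iff_ne_zero.mpr (Nat.succ_ne_zero n)) (by norm_num)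
    calc a n ≤ γ ^ (n+1) / 1 := by
          apply div_le_div_of_nonneg_left (by positivity) (by norm_num) h1
      _ = γ * γ ^ n := by rw [div_one, pow_succ, mul_comm]
  refine ⟨hsum, ?_⟩
  -- the summand functions
  set f : ℕ → ℝ → ℝ := fun n x => (γ * Real.exp (-t ^ 2 * x ^ 2 / 2)) ^ (n + 1) / ((n:ℝ) + 1) with hf
  have fn_eq : ∀ (n : ℕ) (x : ℝ),
      f n x = (γ ^ (n+1) / ((n:ℝ)+1)) * Real.exp (-(((n:ℝ)+1) * t ^ 2 / 2) * x ^ 2) := by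
    intro n x
    have hexp : ((n:ℝ)+1) * (-t ^ 2 * x ^ 2 / 2) = -(((n:ℝ)+1) * t ^ 2 / 2) * x ^ 2 := by ring
    have : (Real.exp (-t ^ 2 * x ^ 2 / 2)) ^ (n+1)
        = Real.exp (-(((n:ℝ)+1) * t ^ 2 / 2) * x ^ 2) := by
      rw [← Real.exp_nat_mul]
      congr 1
      push_cast
      ring
    simp only [hf, mul_pow, this]
    ring
  have hb : ∀ n : ℕ, (0:ℝ) < ((n:ℝ)+1) * t ^ 2 / 2 := by
    intro n; positivity
  have hInt : ∀ n : ℕ, Integrable (f n) := by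
    intro n
    have : f n = fun x => (γ ^ (n+1) / ((n:ℝ)+1)) * Real.exp (-(((n:ℝ)+1) * t ^ 2 / 2) * x ^ 2) :=
      funext (fn_eq n)
    rw [this]
    exact (integrable_exp_neg_mul_sq (hb n)).const_mul _
  -- value of each integral
  set S := Real.sqrt (2 * Real.pi) / |t| with hS
  have hval : ∀ n : ℕ, ∫ x : ℝ, f n x = S * a n := by
    intro n
    have hn1 : (0:ℝ) < (n:ℝ) + 1 := by positivity
    calc ∫ x : ℝ, f n x
        = ∫ x : ℝ, (γ ^ (n+1) / ((n:ℝ)+1)) * Real.exp (-(((n:ℝ)+1) * t ^ 2 / 2) * x ^ 2) := by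
          exact integral_congr_ae (Filter.Eventually.of_forall fun x => fn_eq n x)
      _ = (γ ^ (n+1) / ((n:ℝ)+1)) * Real.sqrt (Real.pi / (((n:ℝ)+1) * t ^ 2 / 2)) := by
          rw [integral_const_mul, integral_gaussian]
      _ = S * a n := by
          have h1 : Real.pi / (((n:ℝ)+1) * t ^ 2 / 2) = (2 * Real.pi) / (((n:ℝ)+1) * t ^ 2) := by
            field_simp
          have h2 : Real.sqrt (((n:ℝ)+1) * t ^ 2) = Real.sqrt ((n:ℝ)+1) * |t| := by
            rw [Real.sqrt_mul hn1.le, Real.sqrt_sq_eq_abs]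
          have h3 : ((n:ℝ)+1) ^ ((3:ℝ)/2) = ((n:ℝ)+1) * Real.sqrt ((n:ℝ)+1) := by
            rw [Real.sqrt_eq_rpow, ← Real.rpow_one_add' hn1.le (by norm_num)]
            norm_num
          have hsq : (0:ℝ) < Real.sqrt ((n:ℝ)+1) := Real.sqrt_pos.mpr hn1
          rw [h1, Real.sqrt_div (by positivity), h2, hS, ha]
          simp only [Nat.cast_add, Nat.cast_one] at *
          rw [h3]
          field_simp
  have hnonneg : ∀ (n : ℕ) (x : ℝ), 0 ≤ f n x := by
    intro n x
    exact div_nonneg (pow_nonneg (mul_nonneg hγ0.le (Real.exp_pos _).le) _) (by positivity)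
  have hnormint : ∀ n : ℕ, ∫ x : ℝ, ‖f n x‖ = S * a n := by
    intro n
    rw [← hval n]
    exact integral_congr_ae (Filter.Eventually.of_forall fun x => Real.norm_of_nonneg (hnonneg n x))
  have hsumnorm : Summable fun n : ℕ => ∫ x : ℝ, ‖f n x‖ := by
    simp only [hnormint]
    exact hsum.mul_left S
  -- pointwise series for the log
  have hpt : ∀ x : ℝ, HasSum (fun n : ℕ => f n x)
      (-Real.log (1 - γ * Real.exp (-t ^ 2 * x ^ 2 / 2))) := by
    intro x
    apply Real.hasSum_pow_div_log_of_abs_lt_one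
    have he1 : Real.exp (-t ^ 2 * x ^ 2 / 2) ≤ 1 := Real.exp_le_one_iff.mpr (by nlinarith)
    have hnn : 0 ≤ γ * Real.exp (-t ^ 2 * x ^ 2 / 2) :=
      mul_nonneg hγ0.le (Real.exp_pos _).le
    rw [abs_of_nonneg hnn]
    calc γ * Real.exp (-t ^ 2 * x ^ 2 / 2) ≤ γ * 1 := by
          exact mul_le_mul_of_nonneg_left he1 hγ0.le
      _ < 1 := by linarith
  calc ∫ x : ℝ, -Real.log (1 - γ * Real.exp (-t ^ 2 * x ^ 2 / 2))
      = ∫ x : ℝ, ∑' n : ℕ, f n x := by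
        exact integral_congr_ae (Filter.Eventually.of_forall fun x => ((hpt x).tsum_eq).symm)
    _ = ∑' n : ℕ, ∫ x : ℝ, f n x :=
        (integral_tsum_of_summable_integral_norm hInt hsumnorm).symm
    _ = ∑' n : ℕ, S * a n := by simp only [hval]
    _ = S * ∑' n : ℕ, a n := tsum_mul_left
end

section
/- For t ∈ ℝ let S_t denote the integral operator on L²(0,∞) with kernel S_t(x,y) = (1/√π) e^{-(x+y+t)²}. Then for every f ∈ L²(0,∞): (i) ∫₀^∞ | ∫₀^∞ S_t(x,y) f(y) dy |² dx ≤ ∫₀^∞ |f(y)|² dy, i.e. ‖S_t f‖_{L²(0,∞)} ≤ ‖f‖_{L²(0,∞)}; and (ii) if f(x) = ∫₀^∞ S_t(x,y) f(y) dy for almost every x > 0, or f(x) = −∫₀^∞ S_t(x,y) f(y) dy for almost every x > 0, then f = 0 almost everywhere; in other words, both 1 − S_t and 1 + S_t are injective on L²(0,∞). -/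
open MeasureTheory Real Set
open scoped ENNReal

private lemma gauss_total (a : ℝ) :
    ∫⁻ s : ℝ, ENNReal.ofReal ((1 / Real.sqrt Real.pi) * Real.exp (-(s + a) ^ 2)) = 1 := by
  have h1 : (∫⁻ s : ℝ, ENNReal.ofReal ((1 / Real.sqrt Real.pi) * Real.exp (-(s + a) ^ 2)))
      = ∫⁻ s : ℝ, ENNReal.ofReal ((1 / Real.sqrt Real.pi) * Real.exp (-s ^ 2)) :=
    lintegral_add_right_eq_self
      (fun s : ℝ => ENNReal.ofReal ((1 / Real.sqrt Real.pi) * Real.exp (-s ^ 2))) a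
  have hint : Integrable (fun s : ℝ => (1 / Real.sqrt Real.pi) * Real.exp (-s ^ 2)) := by
    have := (integrable_exp_neg_mul_sq (one_pos)).const_mul (1 / Real.sqrt Real.pi)
    simpa using this
  have hval : (∫ s : ℝ, (1 / Real.sqrt Real.pi) * Real.exp (-s ^ 2)) = 1 := by
    rw [integral_const_mul]
    have hg := integral_gaussian 1
    simp only [neg_mul, one_mul, div_one] at hg
    rw [hg, one_div, inv_mul_cancel₀ (Real.sqrt_pos.mpr Real.pi_pos).ne']
  rw [h1, ← ofReal_integral_eq_lintegral_ofReal hint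
    (Filter.Eventually.of_forall fun s => by positivity), hval, ENNReal.ofReal_one]

private lemma gauss_Ioi_lt_one (a : ℝ) :
    (∫⁻ s in Set.Ioi (0 : ℝ),
      ENNReal.ofReal ((1 / Real.sqrt Real.pi) * Real.exp (-(s + a) ^ 2))) < 1 := by
  set G : ℝ → ℝ≥0∞ := fun s => ENNReal.ofReal ((1 / Real.sqrt Real.pi) * Real.exp (-(s + a) ^ 2))
    with hGdef
  have hGm : Measurable G := by
    apply Measurable.ennreal_ofReal
    fun_prop
  have hsplit : (∫⁻ s in Set.Ioi (0 : ℝ), G s) + ∫⁻ s in Set.Iic (0 : ℝ), G s = 1 := by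
    have h := lintegral_add_compl (μ := volume) G (measurableSet_Ioi (a := (0:ℝ)))
    rw [Set.compl_Ioi] at h
    rw [h]
    exact gauss_total a
  have hpos : 0 < ∫⁻ s in Set.Iic (0 : ℝ), G s := by
    rw [lintegral_pos_iff_support hGm]
    have hsupp : Function.support G = Set.univ := Set.eq_univ_of_forall fun s => by
      simp only [Function.mem_support, hGdef, ne_eq, ENNReal.ofReal_eq_zero, not_le]
      positivity
    rw [hsupp, Measure.restrict_apply_univ, Real.volume_Iic]
    exact ENNReal.zero_lt_top
  have hne : (∫⁻ s in Set.Ioi (0 : ℝ), G s) ≠ ⊤ := by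
    intro h
    rw [h] at hsplit
    simp at hsplit
  calc (∫⁻ s in Set.Ioi (0 : ℝ), G s)
      < (∫⁻ s in Set.Ioi (0 : ℝ), G s) + ∫⁻ s in Set.Iic (0 : ℝ), G s :=
        ENNReal.lt_add_right hne hpos.ne'
    _ = 1 := hsplit

set_option maxHeartbeats 1000000 in
private lemma key_ineq (t : ℝ) (f : ℝ → ℂ)
    (hf : MemLp f 2 (volume.restrict (Set.Ioi (0 : ℝ)))) :
    (∫⁻ x in Set.Ioi (0 : ℝ),
        (‖∫ y in Set.Ioi (0 : ℝ),
          (((1 / Real.sqrt Real.pi) * Real.exp (-(x + y + t) ^ 2) : ℝ) : ℂ) * f y‖₊ : ℝ≥0∞) ^ 2) ≤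
      ∫⁻ y in Set.Ioi (0 : ℝ),
        (∫⁻ x in Set.Ioi (0 : ℝ),
          ENNReal.ofReal ((1 / Real.sqrt Real.pi) * Real.exp (-(x + y + t) ^ 2))) *
          (‖f y‖₊ : ℝ≥0∞) ^ 2 := by
  set μ := volume.restrict (Set.Ioi (0 : ℝ)) with hμ
  set K : ℝ → ℝ → ℝ≥0∞ :=
    fun x y => ENNReal.ofReal ((1 / Real.sqrt Real.pi) * Real.exp (-(x + y + t) ^ 2)) with hKdef
  set φ : ℝ → ℝ≥0∞ := fun y => (‖f y‖₊ : ℝ≥0∞) with hφdef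
  have hφm : AEMeasurable φ μ := hf.1.enorm
  have hKcont : Continuous fun p : ℝ × ℝ =>
      (1 / Real.sqrt Real.pi) * Real.exp (-(p.1 + p.2 + t) ^ 2) := by fun_prop
  have hKunc : Measurable fun p : ℝ × ℝ => K p.1 p.2 :=
    Measurable.ennreal_ofReal hKcont.measurable
  have hKm : ∀ x, Measurable fun y => K x y := fun x => by
    simp only [hKdef]
    exact Measurable.ennreal_ofReal (by fun_prop)
  have hKm' : ∀ y, Measurable fun x => K x y := fun y => by
    simp only [hKdef]
    exact Measurable.ennreal_ofReal (by fun_prop)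
  have hrow : ∀ x, (∫⁻ y in Set.Ioi (0 : ℝ), K x y) ≤ 1 := by
    intro x
    have h := gauss_Ioi_lt_one (x + t)
    refine le_of_lt (lt_of_le_of_lt (le_of_eq ?_) h)
    refine lintegral_congr fun y => ?_
    simp only [hKdef]
    rw [show x + y + t = y + (x + t) by ring]
  -- pointwise ENNReal facts about square roots
  have hsqrt : ∀ a : ℝ≥0∞, a ^ (1/2 : ℝ) * a ^ (1/2 : ℝ) = a := fun a => by
    rw [← ENNReal.rpow_add_of_nonneg _ _ (by norm_num) (by norm_num)]
    norm_num
  have hhalfR : ∀ a : ℝ≥0∞, (a ^ (1/2 : ℝ)) ^ (2 : ℝ) = a := fun a => by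
    rw [← ENNReal.rpow_mul]
    norm_num
  have hhalfN : ∀ a : ℝ≥0∞, (a ^ (1/2 : ℝ)) ^ (2 : ℕ) = a := fun a => by
    rw [← ENNReal.rpow_natCast (a ^ (1/2 : ℝ)) 2, ← ENNReal.rpow_mul]
    norm_num
  have hpow2 : ∀ a : ℝ≥0∞, a ^ (2 : ℝ) = a ^ (2 : ℕ) := fun a => by
    rw [show (2 : ℝ) = ((2 : ℕ) : ℝ) by norm_num, ENNReal.rpow_natCast]
  -- step A : pointwise bound on the norm of the integral
  have hA : ∀ x : ℝ,
      (‖∫ y in Set.Ioi (0 : ℝ),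
        (((1 / Real.sqrt Real.pi) * Real.exp (-(x + y + t) ^ 2) : ℝ) : ℂ) * f y‖₊ : ℝ≥0∞)
        ≤ ∫⁻ y in Set.Ioi (0 : ℝ), K x y * φ y := by
    intro x
    refine le_trans (enorm_integral_le_lintegral_enorm _) (le_of_eq ?_)
    refine lintegral_congr fun y => ?_
    rw [enorm_eq_nnnorm, nnnorm_mul, ENNReal.coe_mul, Complex.nnnorm_real, ← enorm_eq_nnnorm,
      Real.enorm_eq_ofReal (by positivity)]
  -- step B : Cauchy–Schwarz
  have hCS : ∀ x : ℝ,
      (∫⁻ y in Set.Ioi (0 : ℝ), K x y * φ y) ^ 2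
        ≤ (∫⁻ y in Set.Ioi (0 : ℝ), K x y) * ∫⁻ y in Set.Ioi (0 : ℝ), K x y * φ y ^ 2 := by
    intro x
    have h2 : Real.HolderConjugate 2 2 := Real.HolderConjugate.two_two
    have hu : AEMeasurable (fun y => (K x y) ^ (1/2 : ℝ)) μ :=
      ((hKm x).pow_const _).aemeasurable
    have hv : AEMeasurable (fun y => (K x y) ^ (1/2 : ℝ) * φ y) μ := hu.mul hφm
    have h := ENNReal.lintegral_mul_le_Lp_mul_Lq μ h2 hu hv
    simp only [Pi.mul_apply] at h
    have l1 : (∫⁻ y in Set.Ioi (0 : ℝ), (K x y) ^ (1/2 : ℝ) * ((K x y) ^ (1/2 : ℝ) * φ y))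
        = ∫⁻ y in Set.Ioi (0 : ℝ), K x y * φ y :=
      lintegral_congr fun y => by rw [← mul_assoc, hsqrt]
    have l2 : (∫⁻ y in Set.Ioi (0 : ℝ), ((K x y) ^ (1/2 : ℝ)) ^ (2 : ℝ))
        = ∫⁻ y in Set.Ioi (0 : ℝ), K x y :=
      lintegral_congr fun y => hhalfR _
    have l3 : (∫⁻ y in Set.Ioi (0 : ℝ), ((K x y) ^ (1/2 : ℝ) * φ y) ^ (2 : ℝ))
        = ∫⁻ y in Set.Ioi (0 : ℝ), K x y * φ y ^ 2 :=
      lintegral_congr fun y => by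
        rw [ENNReal.mul_rpow_of_nonneg _ _ (by norm_num), hhalfR, hpow2]
    rw [l1, l2, l3] at h
    calc (∫⁻ y in Set.Ioi (0 : ℝ), K x y * φ y) ^ 2
        ≤ ((∫⁻ y in Set.Ioi (0 : ℝ), K x y) ^ (1/(2:ℝ)) *
            (∫⁻ y in Set.Ioi (0 : ℝ), K x y * φ y ^ 2) ^ (1/(2:ℝ))) ^ 2 :=
          pow_le_pow_left₀ zero_le h 2
      _ = (∫⁻ y in Set.Ioi (0 : ℝ), K x y) * ∫⁻ y in Set.Ioi (0 : ℝ), K x y * φ y ^ 2 := by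
          rw [mul_pow, hhalfN, hhalfN]
  -- combine pointwise, then swap
  have hpt : ∀ x : ℝ,
      (‖∫ y in Set.Ioi (0 : ℝ),
        (((1 / Real.sqrt Real.pi) * Real.exp (-(x + y + t) ^ 2) : ℝ) : ℂ) * f y‖₊ : ℝ≥0∞) ^ 2
        ≤ ∫⁻ y in Set.Ioi (0 : ℝ), K x y * φ y ^ 2 := by
    intro x
    calc (‖∫ y in Set.Ioi (0 : ℝ),
        (((1 / Real.sqrt Real.pi) * Real.exp (-(x + y + t) ^ 2) : ℝ) : ℂ) * f y‖₊ : ℝ≥0∞) ^ 2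
        ≤ (∫⁻ y in Set.Ioi (0 : ℝ), K x y * φ y) ^ 2 := pow_le_pow_left₀ zero_le (hA x) 2
      _ ≤ (∫⁻ y in Set.Ioi (0 : ℝ), K x y) * ∫⁻ y in Set.Ioi (0 : ℝ), K x y * φ y ^ 2 := hCS x
      _ ≤ 1 * ∫⁻ y in Set.Ioi (0 : ℝ), K x y * φ y ^ 2 := mul_le_mul_left (hrow x) _
      _ = ∫⁻ y in Set.Ioi (0 : ℝ), K x y * φ y ^ 2 := one_mul _
  have hunc : AEMeasurable (fun p : ℝ × ℝ => K p.1 p.2 * φ p.2 ^ 2) (μ.prod μ) :=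
    hKunc.aemeasurable.mul (hφm.comp_snd.pow_const 2)
  calc (∫⁻ x in Set.Ioi (0 : ℝ),
        (‖∫ y in Set.Ioi (0 : ℝ),
          (((1 / Real.sqrt Real.pi) * Real.exp (-(x + y + t) ^ 2) : ℝ) : ℂ) * f y‖₊ : ℝ≥0∞) ^ 2)
      ≤ ∫⁻ x in Set.Ioi (0 : ℝ), ∫⁻ y in Set.Ioi (0 : ℝ), K x y * φ y ^ 2 :=
        lintegral_mono fun x => hpt x
    _ = ∫⁻ y in Set.Ioi (0 : ℝ), ∫⁻ x in Set.Ioi (0 : ℝ), K x y * φ y ^ 2 :=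
        lintegral_lintegral_swap hunc
    _ = ∫⁻ y in Set.Ioi (0 : ℝ), (∫⁻ x in Set.Ioi (0 : ℝ), K x y) * φ y ^ 2 :=
        lintegral_congr fun y => lintegral_mul_const'' _ (hKm' y).aemeasurable

set_option maxHeartbeats 1000000 in
/-- The integral operator `S_t` on `L²(0,∞)` with kernel
`(1/√π) e^{-(x+y+t)²}` is a contraction, and both `1 − S_t` and `1 + S_t` are injective. -/
theorem St_contraction_and_injective (t : ℝ) (f : ℝ → ℂ)
    (hf : MemLp f 2 (volume.restrict (Set.Ioi (0 : ℝ)))) :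
    ((∫ x in Set.Ioi (0 : ℝ),
        ‖∫ y in Set.Ioi (0 : ℝ),
            (((1 / Real.sqrt Real.pi) * Real.exp (-(x + y + t) ^ 2) : ℝ) : ℂ) * f y‖ ^ 2) ≤
      ∫ y in Set.Ioi (0 : ℝ), ‖f y‖ ^ 2) ∧
    ((∀ᵐ x ∂volume.restrict (Set.Ioi (0 : ℝ)),
        f x = ∫ y in Set.Ioi (0 : ℝ),
          (((1 / Real.sqrt Real.pi) * Real.exp (-(x + y + t) ^ 2) : ℝ) : ℂ) * f y) →
      f =ᵐ[volume.restrict (Set.Ioi (0 : ℝ))] 0) ∧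
    ((∀ᵐ x ∂volume.restrict (Set.Ioi (0 : ℝ)),
        f x = -∫ y in Set.Ioi (0 : ℝ),
          (((1 / Real.sqrt Real.pi) * Real.exp (-(x + y + t) ^ 2) : ℝ) : ℂ) * f y) →
      f =ᵐ[volume.restrict (Set.Ioi (0 : ℝ))] 0) := by
  have key := key_ineq t f hf
  set μ := volume.restrict (Set.Ioi (0 : ℝ)) with hμ
  set g : ℝ → ℂ := fun x => ∫ y in Set.Ioi (0 : ℝ),
    (((1 / Real.sqrt Real.pi) * Real.exp (-(x + y + t) ^ 2) : ℝ) : ℂ) * f y with hgdef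
  set φ : ℝ → ℝ≥0∞ := fun y => (‖f y‖₊ : ℝ≥0∞) with hφdef
  set c : ℝ → ℝ≥0∞ := fun y => ∫⁻ x in Set.Ioi (0 : ℝ),
    ENNReal.ofReal ((1 / Real.sqrt Real.pi) * Real.exp (-(x + y + t) ^ 2)) with hcdef
  have hφm : AEMeasurable φ μ := hf.1.enorm
  have hφ2 : AEMeasurable (fun y => φ y ^ 2) μ := hφm.pow_const 2
  have hKcont : Continuous fun p : ℝ × ℝ =>
      (1 / Real.sqrt Real.pi) * Real.exp (-(p.1 + p.2 + t) ^ 2) := by fun_prop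
  have hcol : ∀ y : ℝ, c y < 1 := by
    intro y
    have h := gauss_Ioi_lt_one (y + t)
    refine lt_of_le_of_lt (le_of_eq ?_) h
    refine lintegral_congr fun x => ?_
    rw [show x + y + t = x + (y + t) by ring]
  have hcm : Measurable c := by
    have hm : Measurable fun p : ℝ × ℝ =>
        ENNReal.ofReal ((1 / Real.sqrt Real.pi) * Real.exp (-(p.2 + p.1 + t) ^ 2)) :=
      Measurable.ennreal_ofReal (by fun_prop)
    exact Measurable.lintegral_prod_right' (ν := volume.restrict (Set.Ioi (0 : ℝ))) hm
  -- finiteness of ∫⁻ φ²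
  have hfin : (∫⁻ y in Set.Ioi (0 : ℝ), φ y ^ 2) ≠ ⊤ := by
    have h2 := hf.2
    rw [eLpNorm_eq_lintegral_rpow_enorm_toReal two_ne_zero (by norm_num)] at h2
    simp only [ENNReal.toReal_ofNat] at h2
    rw [ENNReal.rpow_lt_top_iff_of_pos (by norm_num : (0:ℝ) < 1/2)] at h2
    have heq : (∫⁻ y in Set.Ioi (0 : ℝ), ‖f y‖ₑ ^ (2 : ℝ))
        = ∫⁻ y in Set.Ioi (0 : ℝ), φ y ^ 2 := lintegral_congr fun y => by
      rw [show (2 : ℝ) = ((2 : ℕ) : ℝ) by norm_num, ENNReal.rpow_natCast, enorm_eq_nnnorm]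
    rw [heq] at h2
    exact h2.ne
  have hRHS : (∫⁻ y in Set.Ioi (0 : ℝ), c y * φ y ^ 2) ≤ ∫⁻ y in Set.Ioi (0 : ℝ), φ y ^ 2 :=
    lintegral_mono fun y => by
      calc c y * φ y ^ 2 ≤ 1 * φ y ^ 2 := mul_le_mul_left (hcol y).le _
        _ = φ y ^ 2 := one_mul _
  -- measurability of g
  have hgm : AEStronglyMeasurable g μ := by
    apply AEStronglyMeasurable.integral_prod_right'
      (f := fun p : ℝ × ℝ =>
        (((1 / Real.sqrt Real.pi) * Real.exp (-(p.1 + p.2 + t) ^ 2) : ℝ) : ℂ) * f p.2)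
    exact ((Complex.continuous_ofReal.comp hKcont).aestronglyMeasurable).mul hf.1.comp_snd
  -- conversions between Bochner and lower integrals
  have hLHS_eq : (∫ x in Set.Ioi (0 : ℝ), ‖g x‖ ^ 2)
      = (∫⁻ x in Set.Ioi (0 : ℝ), (‖g x‖₊ : ℝ≥0∞) ^ 2).toReal := by
    rw [integral_eq_lintegral_of_nonneg_ae (Filter.Eventually.of_forall fun x => by positivity)
      ((hgm.norm.aemeasurable.pow_const 2).aestronglyMeasurable)]
    congr 1
    exact lintegral_congr fun x => by
      rw [ENNReal.ofReal_pow (norm_nonneg _), ofReal_norm, enorm_eq_nnnorm]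
  have hRHS_eq : (∫ y in Set.Ioi (0 : ℝ), ‖f y‖ ^ 2)
      = (∫⁻ y in Set.Ioi (0 : ℝ), φ y ^ 2).toReal := by
    rw [integral_eq_lintegral_of_nonneg_ae (Filter.Eventually.of_forall fun x => by positivity)
      ((hf.1.norm.aemeasurable.pow_const 2).aestronglyMeasurable)]
    congr 1
    refine lintegral_congr fun x => ?_
    simp only [hφdef]
    rw [ENNReal.ofReal_pow (norm_nonneg _), ofReal_norm, enorm_eq_nnnorm]
  -- the key inequality, restated
  have key' : (∫⁻ x in Set.Ioi (0 : ℝ), (‖g x‖₊ : ℝ≥0∞) ^ 2)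
      ≤ ∫⁻ y in Set.Ioi (0 : ℝ), c y * φ y ^ 2 := key
  -- the injectivity helper
  have main : ((fun x => (‖f x‖₊ : ℝ≥0∞)) =ᵐ[μ] fun x => (‖g x‖₊ : ℝ≥0∞)) →
      f =ᵐ[μ] 0 := by
    intro h
    have heq : (∫⁻ x in Set.Ioi (0 : ℝ), φ x ^ 2)
        = ∫⁻ x in Set.Ioi (0 : ℝ), (‖g x‖₊ : ℝ≥0∞) ^ 2 :=
      lintegral_congr_ae (h.mono fun x hx => congrArg (· ^ 2) hx)
    have h1 : (∫⁻ y in Set.Ioi (0 : ℝ), φ y ^ 2)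
        ≤ ∫⁻ y in Set.Ioi (0 : ℝ), c y * φ y ^ 2 := heq ▸ key'
    have hsplit : (∫⁻ y in Set.Ioi (0 : ℝ), c y * φ y ^ 2)
        + (∫⁻ y in Set.Ioi (0 : ℝ), (1 - c y) * φ y ^ 2)
        = ∫⁻ y in Set.Ioi (0 : ℝ), φ y ^ 2 := by
      rw [← lintegral_add_left' (show AEMeasurable (fun y => c y * φ y ^ 2) μ from hcm.aemeasurable.mul hφ2)]
      exact lintegral_congr fun y => by
        rw [← add_mul, add_tsub_cancel_of_le (hcol y).le, one_mul]
    have hfin' : (∫⁻ y in Set.Ioi (0 : ℝ), c y * φ y ^ 2) ≠ ⊤ :=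
      (lt_of_le_of_lt hRHS hfin.lt_top).ne
    have hz : (∫⁻ y in Set.Ioi (0 : ℝ), (1 - c y) * φ y ^ 2) = 0 := by
      have hle : (∫⁻ y in Set.Ioi (0 : ℝ), c y * φ y ^ 2)
          + (∫⁻ y in Set.Ioi (0 : ℝ), (1 - c y) * φ y ^ 2)
          ≤ (∫⁻ y in Set.Ioi (0 : ℝ), c y * φ y ^ 2) + 0 := by
        rw [hsplit, add_zero]; exact h1
      exact le_antisymm (ENNReal.le_of_add_le_add_left hfin' hle) zero_le
    rw [lintegral_eq_zero_iff' (show AEMeasurable (fun y => (1 - c y) * φ y ^ 2) μ from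
      ((measurable_const.sub hcm).aemeasurable).mul hφ2)] at hz
    filter_upwards [hz] with y hy
    simp only [Pi.zero_apply] at hy ⊢
    rcases mul_eq_zero.mp hy with h' | h'
    · exfalso
      rw [tsub_eq_zero_iff_le] at h'
      exact absurd h' (not_le.mpr (hcol y))
    · have hy0 : φ y = 0 := pow_eq_zero_iff two_ne_zero |>.mp h'
      simp only [hφdef, ENNReal.coe_eq_zero, nnnorm_eq_zero] at hy0
      exact hy0
  refine ⟨?_, ?_, ?_⟩
  · -- contraction
    rw [hLHS_eq, hRHS_eq]
    exact ENNReal.toReal_mono hfin (key'.trans hRHS)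
  · intro h
    refine main (h.mono fun x hx => ?_)
    show (‖f x‖₊ : ℝ≥0∞) = (‖g x‖₊ : ℝ≥0∞)
    rw [hx]
  · intro h
    refine main (h.mono fun x hx => ?_)
    show (‖f x‖₊ : ℝ≥0∞) = (‖g x‖₊ : ℝ≥0∞)
    rw [hx, nnnorm_neg]
end

section
/- Let φ, ψ : ℝ → ℝ be continuous functions for which there exist constants C, c > 0 with |φ(x)| ≤ C e^{-c x} and |ψ(x)| ≤ C e^{-c x} for all x ∈ ℝ. Define K(x,y) := ∫₀^∞ φ(x+s) ψ(y+s) ds and, for t ∈ ℝ, define the map A_t on functions by (A_t f)(x) := ∫_t^∞ K(x,s) f(s) ds. Then for every k ≥ 1 and all x, y, t ∈ ℝ: (A_t^k (φ(· + y)))(x) = (A_t^k (φ(· + (x − t))))(t + y), where A_t^k denotes the k-fold iterate of A_t and φ(·+y) denotes the translate u ↦ φ(u + y). -/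
open MeasureTheory

section IterTransAux
open Set

lemma expI {γ : ℝ} (hγ : 0 < γ) (a : ℝ) :
    IntegrableOn (fun s : ℝ => Real.exp (-γ * s)) (Ioi a) := by
  simpa [neg_mul] using exp_neg_integrableOn_Ioi a hγ

lemma exp2 (c s : ℝ) :
    Real.exp (-c * s) * Real.exp (-c * s) = Real.exp (-(2 * c) * s) := by
  rw [← Real.exp_add]; congr 1; ring

lemma expfac (c a b : ℝ) : Real.exp (-c * (a + b)) = Real.exp (-c * a) * Real.exp (-c * b) := by
  rw [← Real.exp_add]; congr 1; ring

lemma shiftIoi (f : ℝ → ℝ) (t : ℝ) :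
    ∫ p in Ioi (0 : ℝ), f (p + t) = ∫ w in Ioi t, f w := by
  have h1 : MeasurePreserving (fun p : ℝ => p + t) volume volume :=
    measurePreserving_add_right volume t
  have h2 : MeasurableEmbedding (fun p : ℝ => p + t) :=
    (MeasurableEquiv.addRight t).measurableEmbedding
  have h3 := h1.setIntegral_preimage_emb h2 f (Ioi t)
  have h4 : (fun p : ℝ => p + t) ⁻¹' (Ioi t) = Ioi (0 : ℝ) := by
    rw [preimage_add_const_Ioi]; simp
  rw [← h3, h4]

lemma Kmeas {φ ψ : ℝ → ℝ} (hφc : Continuous φ) (hψc : Continuous ψ)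
    {K : ℝ → ℝ → ℝ}
    (hK : ∀ x y : ℝ, K x y = ∫ s in Ioi (0 : ℝ), φ (x + s) * ψ (y + s)) :
    StronglyMeasurable fun p : ℝ × ℝ => K p.1 p.2 := by
  have h : (fun p : ℝ × ℝ => K p.1 p.2)
      = fun p : ℝ × ℝ => ∫ s in Ioi (0 : ℝ), φ (p.1 + s) * ψ (p.2 + s) :=
    funext fun p => hK p.1 p.2
  rw [h]
  have hf : StronglyMeasurable (fun q : (ℝ × ℝ) × ℝ => φ (q.1.1 + q.2) * ψ (q.1.2 + q.2)) :=
    Continuous.stronglyMeasurable (by fun_prop)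
  exact hf.integral_prod_right'

lemma Kb {φ ψ : ℝ → ℝ} {C c : ℝ} (hc : 0 < c) (hC : 0 < C)
    (hφ : ∀ x : ℝ, |φ x| ≤ C * Real.exp (-c * x))
    (hψ : ∀ x : ℝ, |ψ x| ≤ C * Real.exp (-c * x))
    {K : ℝ → ℝ → ℝ}
    (hK : ∀ x y : ℝ, K x y = ∫ s in Ioi (0 : ℝ), φ (x + s) * ψ (y + s))
    (x y : ℝ) :
    |K x y| ≤ (C ^ 2 * ∫ v in Ioi (0 : ℝ), Real.exp (-(2 * c) * v)) *
      Real.exp (-c * x) * Real.exp (-c * y) := by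
  have h2c : (0:ℝ) < 2 * c := by linarith
  rw [hK]
  have hb : ∀ v : ℝ, ‖φ (x + v) * ψ (y + v)‖ ≤
      (C ^ 2 * Real.exp (-c * x) * Real.exp (-c * y)) * Real.exp (-(2 * c) * v) := by
    intro v
    rw [Real.norm_eq_abs, abs_mul]
    calc |φ (x + v)| * |ψ (y + v)|
        ≤ (C * Real.exp (-c * (x + v))) * (C * Real.exp (-c * (y + v))) :=
          mul_le_mul (hφ _) (hψ _) (abs_nonneg _)
            (mul_nonneg hC.le (Real.exp_pos _).le)
      _ = (C ^ 2 * Real.exp (-c * x) * Real.exp (-c * y)) * Real.exp (-(2 * c) * v) := by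
          simp only [expfac, ← exp2]; ring
  have h1 := norm_integral_le_of_norm_le
    ((expI h2c 0).const_mul (C ^ 2 * Real.exp (-c * x) * Real.exp (-c * y)))
    (Filter.Eventually.of_forall hb)
  calc |∫ s in Ioi (0:ℝ), φ (x + s) * ψ (y + s)|
      ≤ ∫ v in Ioi (0:ℝ), (C ^ 2 * Real.exp (-c * x) * Real.exp (-c * y)) * Real.exp (-(2 * c) * v) := by
        simpa [Real.norm_eq_abs] using h1
    _ = _ := by rw [integral_const_mul]; ring

lemma Ameas {K : ℝ → ℝ → ℝ} (KS : StronglyMeasurable fun p : ℝ × ℝ => K p.1 p.2)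
    {A : ℝ → (ℝ → ℝ) → (ℝ → ℝ)}
    (hA : ∀ (t : ℝ) (f : ℝ → ℝ) (x : ℝ), A t f x = ∫ s in Ioi t, K x s * f s) (t : ℝ)
    {g : ℝ → ℝ → ℝ} (gS : StronglyMeasurable fun p : ℝ × ℝ => g p.1 p.2) :
    StronglyMeasurable fun p : ℝ × ℝ => A t (g p.1) p.2 := by
  have h : (fun p : ℝ × ℝ => A t (g p.1) p.2)
      = fun p : ℝ × ℝ => ∫ s in Ioi t, K p.2 s * g p.1 s :=
    funext fun p => hA t (g p.1) p.2
  rw [h]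
  have hf : StronglyMeasurable (fun q : (ℝ × ℝ) × ℝ => K q.1.2 q.2 * g q.1.1 q.2) :=
    (KS.comp_measurable (measurable_fst.snd.prodMk measurable_snd)).mul
      (gS.comp_measurable (measurable_fst.fst.prodMk measurable_snd))
  exact hf.integral_prod_right'

lemma Abound {K : ℝ → ℝ → ℝ} {c M : ℝ} (hc : 0 < c) (hM0 : 0 ≤ M)
    (hM : ∀ x y : ℝ, |K x y| ≤ M * Real.exp (-c * x) * Real.exp (-c * y))
    {A : ℝ → (ℝ → ℝ) → (ℝ → ℝ)}
    (hA : ∀ (t : ℝ) (f : ℝ → ℝ) (x : ℝ), A t f x = ∫ s in Ioi t, K x s * f s) (t : ℝ)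
    {g : ℝ → ℝ → ℝ} {D : ℝ} (hD : 0 ≤ D)
    (hg : ∀ u s : ℝ, |g u s| ≤ D * Real.exp (-c * u) * Real.exp (-c * s)) (u x : ℝ) :
    |A t (g u) x| ≤ (M * (∫ s in Ioi t, Real.exp (-(2 * c) * s)) * D) *
      Real.exp (-c * u) * Real.exp (-c * x) := by
  have h2c : (0:ℝ) < 2 * c := by linarith
  rw [hA]
  have hb : ∀ s : ℝ, ‖K x s * g u s‖ ≤
      (M * D * Real.exp (-c * x) * Real.exp (-c * u)) * Real.exp (-(2 * c) * s) := by
    intro s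
    rw [Real.norm_eq_abs, abs_mul]
    calc |K x s| * |g u s|
        ≤ (M * Real.exp (-c * x) * Real.exp (-c * s)) *
            (D * Real.exp (-c * u) * Real.exp (-c * s)) :=
          mul_le_mul (hM x s) (hg u s) (abs_nonneg _)
            (mul_nonneg (mul_nonneg hM0 (Real.exp_pos _).le) (Real.exp_pos _).le)
      _ = _ := by simp only [← exp2]; ring
  have h1 := norm_integral_le_of_norm_le
    ((expI h2c t).const_mul (M * D * Real.exp (-c * x) * Real.exp (-c * u)))
    (Filter.Eventually.of_forall hb)
  calc |∫ s in Ioi t, K x s * g u s|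
      ≤ ∫ s in Ioi t, (M * D * Real.exp (-c * x) * Real.exp (-c * u)) * Real.exp (-(2 * c) * s) := by
        simpa [Real.norm_eq_abs] using h1
    _ = _ := by rw [integral_const_mul]; ring

lemma commute_one {K : ℝ → ℝ → ℝ} {c M : ℝ} (hc : 0 < c) (hM0 : 0 ≤ M)
    (hM : ∀ x y : ℝ, |K x y| ≤ M * Real.exp (-c * x) * Real.exp (-c * y))
    (KS : StronglyMeasurable fun p : ℝ × ℝ => K p.1 p.2)
    {A : ℝ → (ℝ → ℝ) → (ℝ → ℝ)}
    (hA : ∀ (t : ℝ) (f : ℝ → ℝ) (x : ℝ), A t f x = ∫ s in Ioi t, K x s * f s) (t : ℝ)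
    {c_ : ℝ → ℝ} {D' : ℝ} (hD' : 0 ≤ D') (hcm : Measurable c_)
    (hcb : ∀ u : ℝ, |c_ u| ≤ D' * Real.exp (-c * u))
    {g : ℝ → ℝ → ℝ} {D : ℝ} (hD : 0 ≤ D)
    (gS : StronglyMeasurable fun p : ℝ × ℝ => g p.1 p.2)
    (hg : ∀ u s : ℝ, |g u s| ≤ D * Real.exp (-c * u) * Real.exp (-c * s)) (x : ℝ) :
    A t (fun s => ∫ u in Ioi t, c_ u * g u s) x = ∫ u in Ioi t, c_ u * A t (g u) x := by
  have h2c : (0:ℝ) < 2 * c := by linarith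
  rw [hA]
  have h1 : ∀ s : ℝ, K x s * (∫ u in Ioi t, c_ u * g u s)
      = ∫ u in Ioi t, K x s * (c_ u * g u s) :=
    fun s => (integral_const_mul _ _).symm
  simp only [h1]
  have hint : Integrable (Function.uncurry fun s u => K x s * (c_ u * g u s))
      ((volume.restrict (Ioi t)).prod (volume.restrict (Ioi t))) := by
    have hG : Integrable (fun z : ℝ × ℝ =>
        ((M * Real.exp (-c * x) * D' * D) * Real.exp (-(2 * c) * z.1)) * Real.exp (-(2 * c) * z.2))
        ((volume.restrict (Ioi t)).prod (volume.restrict (Ioi t))) :=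
      ((expI h2c t).const_mul _).mul_prod (expI h2c t)
    refine Integrable.mono' hG ?_ (Filter.Eventually.of_forall fun z => ?_)
    · exact ((KS.comp_measurable ((measurable_const (a := x)).prodMk measurable_fst)).mul
        ((hcm.stronglyMeasurable.comp_measurable measurable_snd).mul
          (gS.comp_measurable (measurable_snd.prodMk measurable_fst)))).aestronglyMeasurable
    · show ‖K x z.1 * (c_ z.2 * g z.2 z.1)‖ ≤ _
      rw [Real.norm_eq_abs, abs_mul, abs_mul]
      calc |K x z.1| * (|c_ z.2| * |g z.2 z.1|)
          ≤ (M * Real.exp (-c * x) * Real.exp (-c * z.1)) *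
              ((D' * Real.exp (-c * z.2)) * (D * Real.exp (-c * z.2) * Real.exp (-c * z.1))) :=
            mul_le_mul (hM x z.1)
              (mul_le_mul (hcb z.2) (hg z.2 z.1) (abs_nonneg _)
                (mul_nonneg hD' (Real.exp_pos _).le))
              (mul_nonneg (abs_nonneg _) (abs_nonneg _))
              (mul_nonneg (mul_nonneg hM0 (Real.exp_pos _).le) (Real.exp_pos _).le)
        _ = _ := by simp only [← exp2]; ring
  rw [integral_integral_swap hint]
  simp only [hA]
  refine integral_congr_ae (Filter.Eventually.of_forall fun u => ?_)
  show (∫ s in Ioi t, K x s * (c_ u * g u s)) = c_ u * ∫ s in Ioi t, K x s * g u s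
  rw [← integral_const_mul]
  exact integral_congr_ae (Filter.Eventually.of_forall fun s => by ring)

lemma S1 {φ ψ : ℝ → ℝ} {C c : ℝ} (hc : 0 < c) (hC : 0 < C)
    (hφ : ∀ x : ℝ, |φ x| ≤ C * Real.exp (-c * x))
    (hψ : ∀ x : ℝ, |ψ x| ≤ C * Real.exp (-c * x))
    (hφc : Continuous φ) (hψc : Continuous ψ)
    {K : ℝ → ℝ → ℝ}
    (hK : ∀ x y : ℝ, K x y = ∫ s in Ioi (0 : ℝ), φ (x + s) * ψ (y + s))
    {A : ℝ → (ℝ → ℝ) → (ℝ → ℝ)}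
    (hA : ∀ (t : ℝ) (f : ℝ → ℝ) (x : ℝ), A t f x = ∫ s in Ioi t, K x s * f s)
    (t b s₀ : ℝ) :
    A t (fun w => φ (w + b)) s₀ = ∫ u in Ioi t, K (t + b) u * φ (s₀ + (u - t)) := by
  have h2c : (0:ℝ) < 2 * c := by linarith
  rw [hA]
  have hL : ∀ w : ℝ, K s₀ w * φ (w + b)
      = ∫ v in Ioi (0:ℝ), φ (s₀ + v) * ψ (w + v) * φ (w + b) := by
    intro w; rw [hK, ← integral_mul_const]
  have hR : ∀ u : ℝ, K (t + b) u * φ (s₀ + (u - t))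
      = ∫ v in Ioi (0:ℝ), φ ((t + b) + v) * ψ (u + v) * φ (s₀ + (u - t)) := by
    intro u; rw [hK, ← integral_mul_const]
  simp only [hL, hR]
  have hint1 : Integrable (Function.uncurry fun p v =>
      φ (s₀ + v) * ψ ((p + t) + v) * φ ((p + t) + b))
      ((volume.restrict (Ioi (0:ℝ))).prod (volume.restrict (Ioi (0:ℝ)))) := by
    have hG : Integrable (fun z : ℝ × ℝ =>
        ((C ^ 3 * Real.exp (-c * s₀) * Real.exp (-c * t) * Real.exp (-c * t) * Real.exp (-c * b)) *
          Real.exp (-(2 * c) * z.1)) * Real.exp (-(2 * c) * z.2))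
        ((volume.restrict (Ioi (0:ℝ))).prod (volume.restrict (Ioi (0:ℝ)))) :=
      ((expI h2c 0).const_mul _).mul_prod (expI h2c 0)
    refine Integrable.mono' hG ?_ (Filter.Eventually.of_forall fun z => ?_)
    · exact (Continuous.stronglyMeasurable (by fun_prop :
        Continuous fun z : ℝ × ℝ => φ (s₀ + z.2) * ψ ((z.1 + t) + z.2) * φ ((z.1 + t) + b))).aestronglyMeasurable
    · show ‖φ (s₀ + z.2) * ψ ((z.1 + t) + z.2) * φ ((z.1 + t) + b)‖ ≤ _
      rw [Real.norm_eq_abs, abs_mul, abs_mul]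
      calc |φ (s₀ + z.2)| * |ψ ((z.1 + t) + z.2)| * |φ ((z.1 + t) + b)|
          ≤ (C * Real.exp (-c * (s₀ + z.2))) * (C * Real.exp (-c * ((z.1 + t) + z.2))) *
              (C * Real.exp (-c * ((z.1 + t) + b))) :=
            mul_le_mul
              (mul_le_mul (hφ _) (hψ _) (abs_nonneg _)
                (mul_nonneg hC.le (Real.exp_pos _).le))
              (hφ _) (abs_nonneg _)
              (mul_nonneg (mul_nonneg hC.le (Real.exp_pos _).le)
                (mul_nonneg hC.le (Real.exp_pos _).le))
        _ = _ := by simp only [expfac, ← exp2]; ring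
  calc (∫ s in Ioi t, ∫ v in Ioi (0:ℝ), φ (s₀ + v) * ψ (s + v) * φ (s + b))
      = ∫ p in Ioi (0:ℝ), ∫ v in Ioi (0:ℝ), φ (s₀ + v) * ψ ((p + t) + v) * φ ((p + t) + b) :=
        (shiftIoi (fun w => ∫ v in Ioi (0:ℝ), φ (s₀ + v) * ψ (w + v) * φ (w + b)) t).symm
    _ = ∫ v in Ioi (0:ℝ), ∫ p in Ioi (0:ℝ), φ (s₀ + v) * ψ ((p + t) + v) * φ ((p + t) + b) :=
        integral_integral_swap hint1
    _ = ∫ p in Ioi (0:ℝ), ∫ v in Ioi (0:ℝ),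
          φ ((t + b) + v) * ψ ((p + t) + v) * φ (s₀ + ((p + t) - t)) := by
        refine integral_congr_ae (Filter.Eventually.of_forall fun a => ?_)
        refine integral_congr_ae (Filter.Eventually.of_forall fun q => ?_)
        show φ (s₀ + a) * ψ ((q + t) + a) * φ ((q + t) + b)
            = φ ((t + b) + q) * ψ ((a + t) + q) * φ (s₀ + ((a + t) - t))
        rw [show s₀ + ((a + t) - t) = s₀ + a by ring,
            show (a + t) + q = (q + t) + a by ring,
            show (t + b) + q = (q + t) + b by ring]
        ring
    _ = ∫ u in Ioi t, ∫ v in Ioi (0:ℝ), φ ((t + b) + v) * ψ (u + v) * φ (s₀ + (u - t)) :=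
        shiftIoi (fun u => ∫ v in Ioi (0:ℝ), φ ((t + b) + v) * ψ (u + v) * φ (s₀ + (u - t))) t

lemma CkP {K : ℝ → ℝ → ℝ} {c M : ℝ} (hc : 0 < c) (hM0 : 0 ≤ M)
    (hM : ∀ x y : ℝ, |K x y| ≤ M * Real.exp (-c * x) * Real.exp (-c * y))
    (KS : StronglyMeasurable fun p : ℝ × ℝ => K p.1 p.2)
    {A : ℝ → (ℝ → ℝ) → (ℝ → ℝ)}
    (hA : ∀ (t : ℝ) (f : ℝ → ℝ) (x : ℝ), A t f x = ∫ s in Ioi t, K x s * f s) (t : ℝ)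
    (k : ℕ) :
    ∀ (g : ℝ → ℝ → ℝ) (D : ℝ), 0 ≤ D →
      (StronglyMeasurable fun p : ℝ × ℝ => g p.1 p.2) →
      (∀ u s : ℝ, |g u s| ≤ D * Real.exp (-c * u) * Real.exp (-c * s)) →
      ∀ (c_ : ℝ → ℝ) (D' : ℝ), 0 ≤ D' → Measurable c_ →
      (∀ u : ℝ, |c_ u| ≤ D' * Real.exp (-c * u)) →
      ∀ x : ℝ, (A t)^[k] (fun s => ∫ u in Ioi t, c_ u * g u s) x
          = ∫ u in Ioi t, c_ u * (A t)^[k] (g u) x := by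
  induction k with
  | zero => intro g D _ _ _ c_ D' _ _ _ x; simp
  | succ k ih =>
    intro g D hD gS hg c_ D' hD' hcm hcb x
    have hmul : 0 ≤ M * (∫ s in Ioi t, Real.exp (-(2 * c) * s)) * D :=
      mul_nonneg (mul_nonneg hM0 (integral_nonneg fun s => (Real.exp_pos _).le)) hD
    have step : A t (fun s => ∫ u in Ioi t, c_ u * g u s)
        = fun s => ∫ u in Ioi t, c_ u * A t (g u) s :=
      funext fun s => commute_one hc hM0 hM KS hA t hD' hcm hcb hD gS hg s
    rw [Function.iterate_succ_apply, step]
    rw [ih (fun u => A t (g u)) _ hmul (Ameas KS hA t gS)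
      (fun u s => Abound hc hM0 hM hA t hD hg u s) c_ D' hD' hcm hcb x]
    refine integral_congr_ae (Filter.Eventually.of_forall fun u => ?_)
    show c_ u * (A t)^[k] (A t (g u)) x = c_ u * (A t)^[k + 1] (g u) x
    rw [Function.iterate_succ_apply]

end IterTransAux

open Set in

/-- translation identity for the iterates of the integral operator
`(A_t f)(x) = ∫_t^∞ K(x,s) f(s) ds` with `K(x,y) = ∫₀^∞ φ(x+s)ψ(y+s) ds`:
`(A_t^k φ_y)(x) = (A_t^k φ_{x−t})(t+y)`. -/
theorem iterate_translation (φ ψ : ℝ → ℝ) (hφc : Continuous φ) (hψc : Continuous ψ)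
    (C c : ℝ) (hC : 0 < C) (hc : 0 < c)
    (hφ : ∀ x : ℝ, |φ x| ≤ C * Real.exp (-c * x))
    (hψ : ∀ x : ℝ, |ψ x| ≤ C * Real.exp (-c * x))
    (K : ℝ → ℝ → ℝ)
    (hK : ∀ x y : ℝ, K x y = ∫ s in Set.Ioi (0 : ℝ), φ (x + s) * ψ (y + s))
    (A : ℝ → (ℝ → ℝ) → (ℝ → ℝ))
    (hA : ∀ (t : ℝ) (f : ℝ → ℝ) (x : ℝ), A t f x = ∫ s in Set.Ioi t, K x s * f s)
    (k : ℕ) (hk : 1 ≤ k) (x y t : ℝ) :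
    (A t)^[k] (fun u => φ (u + y)) x = (A t)^[k] (fun u => φ (u + (x - t))) (t + y) := by
  have hM := Kb hc hC hφ hψ hK
  have hM0 : 0 ≤ C ^ 2 * ∫ v in Ioi (0:ℝ), Real.exp (-(2 * c) * v) :=
    mul_nonneg (pow_nonneg hC.le 2) (integral_nonneg fun v => (Real.exp_pos _).le)
  have KS := Kmeas hφc hψc hK
  have H : ∀ k : ℕ, 1 ≤ k → ∀ x y : ℝ,
      (A t)^[k] (fun u => φ (u + y)) x = (A t)^[k] (fun u => φ (u + (x - t))) (t + y) := by
    intro k hk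
    induction k, hk using Nat.le_induction with
    | base =>
      intro x y
      simp only [Function.iterate_one]
      rw [S1 hc hC hφ hψ hφc hψc hK hA t y x]
      simp only [hA]
      refine integral_congr_ae (Filter.Eventually.of_forall fun u => ?_)
      show K (t + y) u * φ (x + (u - t)) = K (t + y) u * φ (u + (x - t))
      rw [show x + (u - t) = u + (x - t) by ring]
    | succ k hk ih =>
      intro x y
      rw [Function.iterate_succ_apply]
      have hs1 : A t (fun u => φ (u + y))
          = fun s => ∫ u in Ioi t, K (t + y) u * φ (s + (u - t)) :=
        funext fun s => S1 hc hC hφ hψ hφc hψc hK hA t y s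
      rw [hs1]
      have hgS : StronglyMeasurable (fun p : ℝ × ℝ => φ (p.2 + (p.1 - t))) :=
        Continuous.stronglyMeasurable (by fun_prop)
      have hgb : ∀ u s : ℝ, |φ (s + (u - t))|
          ≤ (C * Real.exp (c * t)) * Real.exp (-c * u) * Real.exp (-c * s) := by
        intro u s
        calc |φ (s + (u - t))| ≤ C * Real.exp (-c * (s + (u - t))) := hφ _
          _ = (C * Real.exp (c * t)) * Real.exp (-c * u) * Real.exp (-c * s) := by
            rw [show -c * (s + (u - t)) = (c * t + -c * u) + -c * s by ring,
              Real.exp_add, Real.exp_add]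
            ring
      have hcm : Measurable fun u => K (t + y) u :=
        KS.measurable.comp (measurable_const.prodMk measurable_id)
      have hcb : ∀ u : ℝ, |K (t + y) u|
          ≤ ((C ^ 2 * ∫ v in Ioi (0:ℝ), Real.exp (-(2 * c) * v)) * Real.exp (-c * (t + y)))
            * Real.exp (-c * u) := fun u => hM (t + y) u
      calc (A t)^[k] (fun s => ∫ u in Ioi t, K (t + y) u * φ (s + (u - t))) x
          = ∫ u in Ioi t, K (t + y) u * (A t)^[k] (fun s => φ (s + (u - t))) x :=
            CkP hc hM0 hM KS hA t k (fun u s => φ (s + (u - t))) (C * Real.exp (c * t))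
              (mul_nonneg hC.le (Real.exp_pos _).le) hgS hgb
              (fun u => K (t + y) u) _
              (mul_nonneg hM0 (Real.exp_pos _).le) hcm hcb x
        _ = ∫ u in Ioi t, K (t + y) u * (A t)^[k] (fun s => φ (s + (x - t))) u := by
            refine integral_congr_ae (Filter.Eventually.of_forall fun u => ?_)
            show K (t + y) u * (A t)^[k] (fun s => φ (s + (u - t))) x = _
            rw [ih x (u - t), show t + (u - t) = u by ring]
        _ = A t ((A t)^[k] fun s => φ (s + (x - t))) (t + y) := by rw [hA]
        _ = (A t)^[k + 1] (fun u => φ (u + (x - t))) (t + y) := by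
            rw [Function.iterate_succ_apply']
  exact H k hk x y
end

section
/- Let φ, ψ : ℝ → ℝ be continuous functions for which there exist constants C, c > 0 with |φ(x)| ≤ C e^{-c x} and |ψ(x)| ≤ C e^{-c x} for all x ∈ ℝ, and assume in addition φ ∈ L¹(ℝ). Define K(x,y) := ∫₀^∞ φ(x+s) ψ(y+s) ds and, for t ∈ ℝ, (A_t f)(x) := ∫_t^∞ K(x,s) f(s) ds. Let I ⊆ ℝ be a measurable set and set Φ(x) := ∫_I φ(x+y) dy. Then for every k ≥ 1 and all x, t ∈ ℝ: (A_t^k Φ)(x) = ∫_I (A_t^k (φ(· + (x − t))))(t + y) dy, where A_t^k is the k-fold iterate of A_t. -/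
open MeasureTheory Set

noncomputable section

namespace IterPerm

/-- The concrete kernel. -/
def K0 (φ ψ : ℝ → ℝ) (x s : ℝ) : ℝ := ∫ u in Set.Ioi (0:ℝ), φ (x + u) * ψ (s + u)

/-- The concrete operator. -/
def AA (φ ψ : ℝ → ℝ) (t : ℝ) (f : ℝ → ℝ) : ℝ → ℝ :=
  fun x => ∫ s in Set.Ioi t, K0 φ ψ x s * f s

/-- Symmetric-kernel building block. -/
def Pop (χ : ℝ → ℝ) (t : ℝ) (f : ℝ → ℝ) : ℝ → ℝ :=
  fun v => ∫ s in Set.Ioi t, χ (v + s - t) * f s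

/-- Admissible class of functions. -/
def Good (c : ℝ) (g : ℝ → ℝ) : Prop :=
  Measurable g ∧ ∃ D, 0 ≤ D ∧ ∀ u, |g u| ≤ D * (Real.exp (-c * u) + 1)

variable {φ ψ χ f g : ℝ → ℝ} {C c t : ℝ}

lemma intE (hc : 0 < c) (a : ℝ) :
    IntegrableOn (fun s => Real.exp (-c * s)) (Set.Ioi a) :=
  exp_neg_integrableOn_Ioi a hc

lemma intEE (hc : 0 < c) (a : ℝ) :
    IntegrableOn (fun s => Real.exp (-c * s) * Real.exp (-c * s)) (Set.Ioi a) := by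
  have h : (fun s => Real.exp (-c * s) * Real.exp (-c * s))
      = fun s => Real.exp (-(2*c) * s) := by
    funext s; rw [← Real.exp_add]; ring_nf
  rw [h]; exact exp_neg_integrableOn_Ioi a (by linarith)

lemma intE2 (hc : 0 < c) (a : ℝ) :
    IntegrableOn (fun s => Real.exp (-c * s) * (Real.exp (-c * s) + 1)) (Set.Ioi a) := by
  have h : (fun s => Real.exp (-c * s) * (Real.exp (-c * s) + 1))
      = fun s => Real.exp (-c*s) * Real.exp (-c*s) + Real.exp (-c * s) := by
    funext s; ring
  rw [h]; exact (intEE hc a).add (intE hc a)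

lemma shift_Ioi (t : ℝ) (F : ℝ → ℝ) :
    ∫ v in Set.Ioi t, F (v - t) = ∫ u in Set.Ioi (0:ℝ), F u := by
  have h1 : MeasurePreserving (fun u : ℝ => u + t) volume volume :=
    measurePreserving_add_right volume t
  have h2 : MeasurableEmbedding (fun u : ℝ => u + t) := measurableEmbedding_addRight t
  have := h1.setIntegral_image_emb h2 (fun v => F (v - t)) (Set.Ioi (0:ℝ))
  rw [Set.image_add_const_Ioi, zero_add] at this
  simpa using this

lemma prod_dominated {μ ν : Measure ℝ} [SFinite μ] [SFinite ν] {F : ℝ × ℝ → ℝ} {f1 f2 : ℝ → ℝ}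
    (hF : AEStronglyMeasurable F (μ.prod ν))
    (h1 : Integrable f1 μ) (h2 : Integrable f2 ν)
    (hb : ∀ p : ℝ × ℝ, ‖F p‖ ≤ f1 p.1 * f2 p.2) : Integrable F (μ.prod ν) :=
  (h1.mul_prod h2).mono' hF (Filter.Eventually.of_forall hb)

lemma K0_meas (hφc : Continuous φ) (hψc : Continuous ψ) :
    Measurable fun p : ℝ × ℝ => K0 φ ψ p.1 p.2 := by
  have h : StronglyMeasurable fun q : (ℝ × ℝ) × ℝ => φ (q.1.1 + q.2) * ψ (q.1.2 + q.2) :=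
    ((hφc.comp ((continuous_fst.fst).add continuous_snd)).mul
      (hψc.comp ((continuous_fst.snd).add continuous_snd))).stronglyMeasurable
  exact (h.integral_prod_right' (ν := volume.restrict (Set.Ioi (0:ℝ)))).measurable

lemma K0_bound (hC : 0 < C) (hc : 0 < c)
    (hφ : ∀ x : ℝ, |φ x| ≤ C * Real.exp (-c * x))
    (hψ : ∀ x : ℝ, |ψ x| ≤ C * Real.exp (-c * x)) :
    ∃ κ, 0 ≤ κ ∧ ∀ x s, |K0 φ ψ x s| ≤ κ * (Real.exp (-c*x) * Real.exp (-c*s)) := by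
  refine ⟨C * C * ∫ u in Set.Ioi (0:ℝ), Real.exp (-(2*c) * u), ?_, ?_⟩
  · exact mul_nonneg (mul_nonneg hC.le hC.le)
      (setIntegral_nonneg measurableSet_Ioi fun u _ => (Real.exp_nonneg _))
  · intro x s
    have hb : ∀ u : ℝ, ‖φ (x+u) * ψ (s+u)‖ ≤
        (C * C * (Real.exp (-c*x) * Real.exp (-c*s))) * Real.exp (-(2*c)*u) := by
      intro u
      rw [norm_mul, Real.norm_eq_abs, Real.norm_eq_abs]
      have h1 : 0 ≤ C * Real.exp (-c*(x+u)) := mul_nonneg hC.le (Real.exp_nonneg _)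
      calc |φ (x+u)| * |ψ (s+u)|
          ≤ (C * Real.exp (-c*(x+u))) * (C * Real.exp (-c*(s+u))) :=
            mul_le_mul (hφ _) (hψ _) (abs_nonneg _) h1
        _ = (C * C * (Real.exp (-c*x) * Real.exp (-c*s))) * Real.exp (-(2*c)*u) := by
            rw [show -c*(x+u) = -c*x + -c*u by ring, show -c*(s+u) = -c*s + -c*u by ring,
              show -(2*c)*u = -c*u + -c*u by ring, Real.exp_add, Real.exp_add, Real.exp_add]
            ring
    calc |K0 φ ψ x s| = ‖∫ u in Set.Ioi (0:ℝ), φ (x+u) * ψ (s+u)‖ := (Real.norm_eq_abs _).symm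
      _ ≤ ∫ u in Set.Ioi (0:ℝ), ‖φ (x+u) * ψ (s+u)‖ := norm_integral_le_integral_norm _
      _ ≤ ∫ u in Set.Ioi (0:ℝ),
            (C * C * (Real.exp (-c*x) * Real.exp (-c*s))) * Real.exp (-(2*c)*u) :=
          integral_mono_of_nonneg (Filter.Eventually.of_forall fun u => norm_nonneg _)
            ((exp_neg_integrableOn_Ioi 0 (by linarith : (0:ℝ) < 2*c)).const_mul _)
            (Filter.Eventually.of_forall hb)
      _ = (C * C * ∫ u in Set.Ioi (0:ℝ), Real.exp (-(2*c)*u)) *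
            (Real.exp (-c*x) * Real.exp (-c*s)) := by
          rw [integral_const_mul]; ring

lemma Good.exp_abs_int (hc : 0 < c) (hg : Good c g) (a : ℝ) :
    IntegrableOn (fun s => Real.exp (-c*s) * |g s|) (Set.Ioi a) := by
  obtain ⟨hm, D, hD0, hD⟩ := hg
  refine ((intE2 hc a).const_mul D).mono' ?_ (Filter.Eventually.of_forall fun s => ?_)
  · exact ((Real.measurable_exp.comp (measurable_id.const_mul (-c))).mul
      hm.abs).aestronglyMeasurable
  · rw [Real.norm_eq_abs, abs_of_nonneg (mul_nonneg (Real.exp_nonneg _) (abs_nonneg _))]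
    calc Real.exp (-c*s) * |g s| ≤ Real.exp (-c*s) * (D * (Real.exp (-c*s)+1)) :=
        mul_le_mul_of_nonneg_left (hD s) (Real.exp_nonneg _)
      _ = D * (Real.exp (-c*s) * (Real.exp (-c*s)+1)) := by ring

lemma AA_le {κ : ℝ} (hκ : ∀ x s, |K0 φ ψ x s| ≤ κ * (Real.exp (-c*x) * Real.exp (-c*s)))
    (hκ0 : 0 ≤ κ)
    (hgi : IntegrableOn (fun s => Real.exp (-c*s) * |g s|) (Set.Ioi t)) (x : ℝ) :
    |AA φ ψ t g x| ≤ (κ * ∫ s in Set.Ioi t, Real.exp (-c*s) * |g s|) * Real.exp (-c*x) := by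
  calc |AA φ ψ t g x| = ‖∫ s in Set.Ioi t, K0 φ ψ x s * g s‖ := (Real.norm_eq_abs _).symm
    _ ≤ ∫ s in Set.Ioi t, ‖K0 φ ψ x s * g s‖ := norm_integral_le_integral_norm _
    _ ≤ ∫ s in Set.Ioi t, (κ * Real.exp (-c*x)) * (Real.exp (-c*s) * |g s|) := by
        refine integral_mono_of_nonneg (Filter.Eventually.of_forall fun s => norm_nonneg _)
          (hgi.const_mul _) (Filter.Eventually.of_forall fun s => ?_)
        show ‖K0 φ ψ x s * g s‖ ≤ (κ * Real.exp (-c*x)) * (Real.exp (-c*s) * |g s|)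
        rw [norm_mul, Real.norm_eq_abs, Real.norm_eq_abs]
        calc |K0 φ ψ x s| * |g s| ≤ (κ * (Real.exp (-c*x) * Real.exp (-c*s))) * |g s| :=
              mul_le_mul_of_nonneg_right (hκ x s) (abs_nonneg _)
          _ = (κ * Real.exp (-c*x)) * (Real.exp (-c*s) * |g s|) := by ring
    _ = (κ * ∫ s in Set.Ioi t, Real.exp (-c*s) * |g s|) * Real.exp (-c*x) := by
        rw [integral_const_mul]; ring

lemma AA_meas (hφc : Continuous φ) (hψc : Continuous ψ) (hg : Measurable g) :
    Measurable (AA φ ψ t g) := by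
  have h : StronglyMeasurable fun p : ℝ × ℝ => K0 φ ψ p.1 p.2 * g p.2 :=
    ((K0_meas hφc hψc).mul (hg.comp measurable_snd)).stronglyMeasurable
  exact (h.integral_prod_right' (ν := volume.restrict (Set.Ioi t))).measurable

lemma AA_good (hφc : Continuous φ) (hψc : Continuous ψ) (hC : 0 < C) (hc : 0 < c)
    (hφ : ∀ x : ℝ, |φ x| ≤ C * Real.exp (-c * x))
    (hψ : ∀ x : ℝ, |ψ x| ≤ C * Real.exp (-c * x))
    (hg : Good c g) : Good c (AA φ ψ t g) := by
  obtain ⟨κ, hκ0, hκ⟩ := K0_bound hC hc hφ hψ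
  have hJ0 : 0 ≤ ∫ s in Set.Ioi t, Real.exp (-c*s) * |g s| :=
    setIntegral_nonneg measurableSet_Ioi fun s _ =>
      mul_nonneg (Real.exp_nonneg _) (abs_nonneg _)
  refine ⟨AA_meas hφc hψc hg.1, κ * ∫ s in Set.Ioi t, Real.exp (-c*s) * |g s|,
    mul_nonneg hκ0 hJ0, fun u => ?_⟩
  refine (AA_le hκ hκ0 (hg.exp_abs_int hc t) u).trans ?_
  have h1 : Real.exp (-c*u) ≤ Real.exp (-c*u) + 1 := by linarith
  exact mul_le_mul_of_nonneg_left h1 (mul_nonneg hκ0 hJ0)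

lemma C_nonneg (hχ : ∀ u : ℝ, |χ u| ≤ C * Real.exp (-c * u)) : 0 ≤ C := by
  have := (abs_nonneg (χ 0)).trans (hχ 0)
  simpa using this

lemma pop_meas (hχc : Continuous χ) (hg : Measurable g) : Measurable (Pop χ t g) := by
  have h : StronglyMeasurable fun p : ℝ × ℝ => χ (p.1 + p.2 - t) * g p.2 :=
    ((hχc.measurable.comp ((measurable_fst.add measurable_snd).sub measurable_const)).mul
      (hg.comp measurable_snd)).stronglyMeasurable
  exact (h.integral_prod_right' (ν := volume.restrict (Set.Ioi t))).measurable

lemma pop_ptwise (hc : 0 < c) (hχ : ∀ u : ℝ, |χ u| ≤ C * Real.exp (-c * u))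
    {D : ℝ} (hD0 : 0 ≤ D) (hD : ∀ u, |g u| ≤ D * (Real.exp (-c * u) + 1)) (v s : ℝ) :
    ‖χ (v + s - t) * g s‖ ≤
      (C * Real.exp (c*t) * D * Real.exp (-c*v)) * (Real.exp (-c*s) * (Real.exp (-c*s) + 1)) := by
  have h0C : 0 ≤ C := C_nonneg hχ
  rw [norm_mul, Real.norm_eq_abs, Real.norm_eq_abs]
  calc |χ (v+s-t)| * |g s| ≤ (C * Real.exp (-c*(v+s-t))) * (D * (Real.exp (-c*s)+1)) :=
        mul_le_mul (hχ _) (hD s) (abs_nonneg _) (mul_nonneg h0C (Real.exp_nonneg _))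
    _ = (C * Real.exp (c*t) * D * Real.exp (-c*v)) *
          (Real.exp (-c*s) * (Real.exp (-c*s) + 1)) := by
        rw [show -c*(v+s-t) = -c*v + -c*s + c*t by ring, Real.exp_add, Real.exp_add]
        ring

lemma pop_integrand_int (hc : 0 < c) (hχc : Continuous χ)
    (hχ : ∀ u : ℝ, |χ u| ≤ C * Real.exp (-c * u)) (hg : Good c g) (v : ℝ) :
    IntegrableOn (fun s => χ (v + s - t) * g s) (Set.Ioi t) := by
  obtain ⟨hm, D, hD0, hD⟩ := hg
  refine ((intE2 hc t).const_mul (C * Real.exp (c*t) * D * Real.exp (-c*v))).mono'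
    ?_ (Filter.Eventually.of_forall fun s => pop_ptwise hc hχ hD0 hD v s)
  exact ((hχc.measurable.comp ((measurable_const.add measurable_id).sub
    measurable_const)).mul hm).aestronglyMeasurable

lemma pop_bound (hc : 0 < c) (hχ : ∀ u : ℝ, |χ u| ≤ C * Real.exp (-c * u)) (hg : Good c g) :
    ∃ D', 0 ≤ D' ∧ ∀ v, |Pop χ t g v| ≤ D' * Real.exp (-c * v) := by
  obtain ⟨hm, D, hD0, hD⟩ := hg
  have h0C : 0 ≤ C := C_nonneg hχ
  refine ⟨C * Real.exp (c*t) * D *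
      ∫ s in Set.Ioi t, Real.exp (-c*s) * (Real.exp (-c*s) + 1), ?_, fun v => ?_⟩
  · refine mul_nonneg (mul_nonneg (mul_nonneg h0C (Real.exp_nonneg _)) hD0)
      (setIntegral_nonneg measurableSet_Ioi fun s _ => ?_)
    have := Real.exp_nonneg (-c*s); nlinarith [Real.exp_nonneg (-c*s)]
  · calc |Pop χ t g v| = ‖∫ s in Set.Ioi t, χ (v+s-t) * g s‖ := (Real.norm_eq_abs _).symm
      _ ≤ ∫ s in Set.Ioi t, ‖χ (v+s-t) * g s‖ := norm_integral_le_integral_norm _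
      _ ≤ ∫ s in Set.Ioi t, (C * Real.exp (c*t) * D * Real.exp (-c*v)) *
            (Real.exp (-c*s) * (Real.exp (-c*s) + 1)) :=
          integral_mono_of_nonneg (Filter.Eventually.of_forall fun s => norm_nonneg _)
            ((intE2 hc t).const_mul _)
            (Filter.Eventually.of_forall fun s => pop_ptwise hc hχ hD0 hD v s)
      _ = (C * Real.exp (c*t) * D *
            ∫ s in Set.Ioi t, Real.exp (-c*s) * (Real.exp (-c*s) + 1)) * Real.exp (-c*v) := by
          rw [integral_const_mul]; ring

lemma pop_good (hc : 0 < c) (hχc : Continuous χ)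
    (hχ : ∀ u : ℝ, |χ u| ≤ C * Real.exp (-c * u)) (hg : Good c g) : Good c (Pop χ t g) := by
  obtain ⟨D', hD'0, hD'⟩ := pop_bound (t := t) hc hχ hg
  refine ⟨pop_meas hχc hg.1, D', hD'0, fun u => ?_⟩
  refine (hD' u).trans (mul_le_mul_of_nonneg_left (by linarith) hD'0)

lemma K0_eq (x s : ℝ) : K0 φ ψ x s = ∫ v in Set.Ioi t, φ (x + v - t) * ψ (s + v - t) := by
  rw [show K0 φ ψ x s = ∫ u in Set.Ioi (0:ℝ), (fun u => φ (x + u) * ψ (s + u)) u from rfl,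
    ← shift_Ioi t (fun u => φ (x + u) * ψ (s + u))]
  refine integral_congr_ae (Filter.Eventually.of_forall fun v => ?_)
  show φ (x + (v - t)) * ψ (s + (v - t)) = _
  rw [show x + (v - t) = x + v - t by ring, show s + (v - t) = s + v - t by ring]

lemma AA_eq_pop (hφc : Continuous φ) (hψc : Continuous ψ) (hC : 0 < C) (hc : 0 < c)
    (hφ : ∀ x : ℝ, |φ x| ≤ C * Real.exp (-c * x))
    (hψ : ∀ x : ℝ, |ψ x| ≤ C * Real.exp (-c * x))
    (hf : Good c f) (x : ℝ) :
    AA φ ψ t f x = Pop φ t (Pop ψ t f) x := by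
  obtain ⟨hm, D, hD0, hD⟩ := hf
  have e1 : AA φ ψ t f x
      = ∫ s in Set.Ioi t, ∫ v in Set.Ioi t, φ (x+v-t) * ψ (s+v-t) * f s := by
    refine integral_congr_ae (Filter.Eventually.of_forall fun s => ?_)
    show K0 φ ψ x s * f s = _
    rw [K0_eq (t := t), ← integral_mul_const]
  have hswap : ∫ s in Set.Ioi t, ∫ v in Set.Ioi t, φ (x+v-t) * ψ (s+v-t) * f s
      = ∫ v in Set.Ioi t, ∫ s in Set.Ioi t, φ (x+v-t) * ψ (s+v-t) * f s := by
    refine integral_integral_swap ?_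
    refine prod_dominated ?_
      (f1 := fun s => (C * C * Real.exp (-c*x) * (Real.exp (c*t) * Real.exp (c*t)) * D) *
        (Real.exp (-c*s) * (Real.exp (-c*s)+1)))
      (f2 := fun v => Real.exp (-c*v) * Real.exp (-c*v))
      (((intE2 hc t).const_mul _)) (intEE hc t) ?_
    · refine Measurable.aestronglyMeasurable ?_
      refine ((hφc.measurable.comp ?_).mul (hψc.measurable.comp ?_)).mul
        (hm.comp measurable_fst)
      · exact (measurable_const.add measurable_snd).sub measurable_const
      · exact (measurable_fst.add measurable_snd).sub measurable_const
    · rintro ⟨s, v⟩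
      show ‖φ (x+v-t) * ψ (s+v-t) * f s‖ ≤ _
      rw [norm_mul, norm_mul, Real.norm_eq_abs, Real.norm_eq_abs, Real.norm_eq_abs]
      have h1 : 0 ≤ C * Real.exp (-c*(x+v-t)) := mul_nonneg hC.le (Real.exp_nonneg _)
      calc |φ (x+v-t)| * |ψ (s+v-t)| * |f s|
          ≤ (C * Real.exp (-c*(x+v-t))) * (C * Real.exp (-c*(s+v-t))) *
            (D * (Real.exp (-c*s)+1)) :=
            mul_le_mul (mul_le_mul (hφ _) (hψ _) (abs_nonneg _) h1) (hD s) (abs_nonneg _)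
              (mul_nonneg h1 (mul_nonneg hC.le (Real.exp_nonneg _)))
        _ = _ := by
            rw [show -c*(x+v-t) = -c*x + -c*v + c*t by ring,
              show -c*(s+v-t) = -c*s + -c*v + c*t by ring,
              Real.exp_add, Real.exp_add, Real.exp_add, Real.exp_add]
            ring
  rw [e1, hswap]
  refine integral_congr_ae (Filter.Eventually.of_forall fun v => ?_)
  show _ = φ (x + v - t) * Pop ψ t f v
  have e2 : φ (x + v - t) * Pop ψ t f v
      = ∫ s in Set.Ioi t, φ (x+v-t) * (ψ (v+s-t) * f s) := (integral_const_mul _ _).symm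
  rw [e2]
  refine integral_congr_ae (Filter.Eventually.of_forall fun s => ?_)
  show φ (x+v-t) * ψ (s+v-t) * f s = φ (x+v-t) * (ψ (v+s-t) * f s)
  rw [show s+v-t = v+s-t by ring]; ring

lemma pop_sym (hc : 0 < c) (hχc : Continuous χ)
    (hχ : ∀ u : ℝ, |χ u| ≤ C * Real.exp (-c * u))
    (hf : Good c f) (hg : Good c g) :
    ∫ v in Set.Ioi t, f v * Pop χ t g v = ∫ v in Set.Ioi t, g v * Pop χ t f v := by
  obtain ⟨hfm, Df, hDf0, hDf⟩ := hf
  obtain ⟨hgm, Dg, hDg0, hDg⟩ := hg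
  have h0C : 0 ≤ C := C_nonneg hχ
  have e1 : ∫ v in Set.Ioi t, f v * Pop χ t g v
      = ∫ v in Set.Ioi t, ∫ s in Set.Ioi t, f v * (χ (v+s-t) * g s) := by
    refine integral_congr_ae (Filter.Eventually.of_forall fun v => ?_)
    exact (integral_const_mul _ _).symm
  have hswap : ∫ v in Set.Ioi t, ∫ s in Set.Ioi t, f v * (χ (v+s-t) * g s)
      = ∫ s in Set.Ioi t, ∫ v in Set.Ioi t, f v * (χ (v+s-t) * g s) := by
    refine integral_integral_swap ?_
    refine prod_dominated ?_
      (f1 := fun v => (C * Real.exp (c*t) * Df * Dg) * (Real.exp (-c*v) * (Real.exp (-c*v)+1)))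
      (f2 := fun s => Real.exp (-c*s) * (Real.exp (-c*s)+1))
      ((intE2 hc t).const_mul _) (intE2 hc t) ?_
    · refine Measurable.aestronglyMeasurable ?_
      exact (hfm.comp measurable_fst).mul ((hχc.measurable.comp
        ((measurable_fst.add measurable_snd).sub measurable_const)).mul (hgm.comp measurable_snd))
    · rintro ⟨v, s⟩
      show ‖f v * (χ (v+s-t) * g s)‖ ≤ _
      rw [norm_mul, norm_mul, Real.norm_eq_abs, Real.norm_eq_abs, Real.norm_eq_abs]
      calc |f v| * (|χ (v+s-t)| * |g s|)
          ≤ (Df * (Real.exp (-c*v)+1)) *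
              ((C * Real.exp (-c*(v+s-t))) * (Dg * (Real.exp (-c*s)+1))) := by
            refine mul_le_mul (hDf v) (mul_le_mul (hχ _) (hDg s) (abs_nonneg _)
              (mul_nonneg h0C (Real.exp_nonneg _))) (mul_nonneg (abs_nonneg _) (abs_nonneg _))
              (mul_nonneg hDf0 (by positivity))
        _ = _ := by
            rw [show -c*(v+s-t) = -c*v + -c*s + c*t by ring, Real.exp_add, Real.exp_add]
            ring
  rw [e1, hswap]
  refine integral_congr_ae (Filter.Eventually.of_forall fun s => ?_)
  have e2 : ∫ v in Set.Ioi t, f v * (χ (v+s-t) * g s)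
      = ∫ v in Set.Ioi t, g s * (χ (s+v-t) * f v) := by
    refine integral_congr_ae (Filter.Eventually.of_forall fun v => ?_)
    show f v * (χ (v+s-t) * g s) = g s * (χ (s+v-t) * f v)
    rw [show v+s-t = s+v-t by ring]; ring
  show (∫ v in Set.Ioi t, f v * (χ (v + s - t) * g s)) = g s * Pop χ t f s
  rw [e2, integral_const_mul]
  rfl

lemma good_phia (hφc : Continuous φ) (hC : 0 < C) (hc : 0 < c)
    (hφ : ∀ x : ℝ, |φ x| ≤ C * Real.exp (-c * x)) (a : ℝ) :
    Good c (fun u => φ (u + a)) := by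
  refine ⟨hφc.measurable.comp (measurable_id.add_const a), C * Real.exp (-c*a),
    mul_nonneg hC.le (Real.exp_nonneg _), fun u => ?_⟩
  calc |φ (u + a)| ≤ C * Real.exp (-c*(u+a)) := hφ _
    _ = (C * Real.exp (-c*a)) * Real.exp (-c*u) := by
        rw [show -c*(u+a) = -c*u + -c*a by ring, Real.exp_add]; ring
    _ ≤ (C * Real.exp (-c*a)) * (Real.exp (-c*u) + 1) := by
        refine mul_le_mul_of_nonneg_left (by linarith) ?_
        positivity

lemma Good.iter (hφc : Continuous φ) (hψc : Continuous ψ) (hC : 0 < C) (hc : 0 < c)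
    (hφ : ∀ x : ℝ, |φ x| ≤ C * Real.exp (-c * x))
    (hψ : ∀ x : ℝ, |ψ x| ≤ C * Real.exp (-c * x))
    (hg : Good c g) (k : ℕ) : Good c ((AA φ ψ t)^[k] g) := by
  induction k with
  | zero => simpa using hg
  | succ k ih =>
    rw [Function.iterate_succ_apply']
    exact AA_good hφc hψc hC hc hφ hψ ih

lemma claim (hφc : Continuous φ) (hψc : Continuous ψ) (hC : 0 < C) (hc : 0 < c)
    (hφ : ∀ x : ℝ, |φ x| ≤ C * Real.exp (-c * x))
    (hψ : ∀ x : ℝ, |ψ x| ≤ C * Real.exp (-c * x)) :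
    ∀ (k : ℕ) (f : ℝ → ℝ), Good c f → ∀ a : ℝ,
      (∫ v in Set.Ioi t, Pop ψ t f v * (AA φ ψ t)^[k] (fun u => φ (u + a)) v)
        = (AA φ ψ t)^[k+1] f (t + a) := by
  intro k
  induction k with
  | zero =>
    intro f hf a
    simp only [Function.iterate_zero_apply, zero_add, Function.iterate_one]
    rw [AA_eq_pop hφc hψc hC hc hφ hψ hf (t+a)]
    show _ = ∫ v in Set.Ioi t, φ (t + a + v - t) * Pop ψ t f v
    refine integral_congr_ae (Filter.Eventually.of_forall fun v => ?_)
    show Pop ψ t f v * φ (v + a) = φ (t + a + v - t) * Pop ψ t f v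
    rw [show t + a + v - t = v + a by ring]; ring
  | succ k ih =>
    intro f hf a
    have hg : Good c ((AA φ ψ t)^[k] fun u => φ (u + a)) :=
      Good.iter hφc hψc hC hc hφ hψ (good_phia hφc hC hc hφ a) k
    have hqf : Good c (Pop ψ t f) := pop_good hc hψc hψ hf
    have hqg : Good c (Pop ψ t ((AA φ ψ t)^[k] fun u => φ (u + a))) :=
      pop_good hc hψc hψ hg
    have hAf : Good c (AA φ ψ t f) := AA_good hφc hψc hC hc hφ hψ hf
    have e1 : ∫ v in Set.Ioi t, Pop ψ t f v * (AA φ ψ t)^[k+1] (fun u => φ (u + a)) v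
        = ∫ v in Set.Ioi t, Pop ψ t f v *
            Pop φ t (Pop ψ t ((AA φ ψ t)^[k] fun u => φ (u + a))) v := by
      refine integral_congr_ae (Filter.Eventually.of_forall fun v => ?_)
      show Pop ψ t f v * (AA φ ψ t)^[k+1] (fun u => φ (u + a)) v
        = Pop ψ t f v * Pop φ t (Pop ψ t ((AA φ ψ t)^[k] fun u => φ (u + a))) v
      rw [Function.iterate_succ_apply', AA_eq_pop hφc hψc hC hc hφ hψ hg v]
    rw [e1, pop_sym hc hφc hφ hqf hqg]
    have e2 : ∫ v in Set.Ioi t,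
          Pop ψ t ((AA φ ψ t)^[k] fun u => φ (u + a)) v * Pop φ t (Pop ψ t f) v
        = ∫ v in Set.Ioi t,
            AA φ ψ t f v * Pop ψ t ((AA φ ψ t)^[k] fun u => φ (u + a)) v := by
      refine integral_congr_ae (Filter.Eventually.of_forall fun v => ?_)
      show Pop ψ t ((AA φ ψ t)^[k] fun u => φ (u + a)) v * Pop φ t (Pop ψ t f) v
        = AA φ ψ t f v * Pop ψ t ((AA φ ψ t)^[k] fun u => φ (u + a)) v
      rw [AA_eq_pop hφc hψc hC hc hφ hψ hf v]; ring
    rw [e2, pop_sym hc hψc hψ hAf hg]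
    have e3 : ∫ v in Set.Ioi t,
          ((AA φ ψ t)^[k] fun u => φ (u + a)) v * Pop ψ t (AA φ ψ t f) v
        = ∫ v in Set.Ioi t,
            Pop ψ t (AA φ ψ t f) v * ((AA φ ψ t)^[k] fun u => φ (u + a)) v := by
      refine integral_congr_ae (Filter.Eventually.of_forall fun v => ?_)
      show ((AA φ ψ t)^[k] fun u => φ (u + a)) v * Pop ψ t (AA φ ψ t f) v
        = Pop ψ t (AA φ ψ t f) v * ((AA φ ψ t)^[k] fun u => φ (u + a)) v
      ring
    rw [e3, ih (AA φ ψ t f) hAf a, ← Function.iterate_succ_apply]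

lemma sym (hφc : Continuous φ) (hψc : Continuous ψ) (hC : 0 < C) (hc : 0 < c)
    (hφ : ∀ x : ℝ, |φ x| ≤ C * Real.exp (-c * x))
    (hψ : ∀ x : ℝ, |ψ x| ≤ C * Real.exp (-c * x))
    (k : ℕ) (hk : 1 ≤ k) (a b : ℝ) :
    (AA φ ψ t)^[k] (fun u => φ (u + a)) (t + b)
      = (AA φ ψ t)^[k] (fun u => φ (u + b)) (t + a) := by
  obtain ⟨m, rfl⟩ : ∃ m, k = m + 1 := ⟨k - 1, (Nat.succ_pred_eq_of_pos hk).symm⟩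
  have hg : Good c ((AA φ ψ t)^[m] fun u => φ (u + a)) :=
    Good.iter hφc hψc hC hc hφ hψ (good_phia hφc hC hc hφ a) m
  rw [Function.iterate_succ_apply', AA_eq_pop hφc hψc hC hc hφ hψ hg (t+b)]
  have e1 : Pop φ t (Pop ψ t ((AA φ ψ t)^[m] fun u => φ (u + a))) (t+b)
      = ∫ v in Set.Ioi t, (fun u => φ (u + b)) v *
          Pop ψ t ((AA φ ψ t)^[m] fun u => φ (u + a)) v := by
    refine integral_congr_ae (Filter.Eventually.of_forall fun v => ?_)
    show φ (t + b + v - t) * _ = φ (v + b) * _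
    rw [show t + b + v - t = v + b by ring]
  rw [e1, pop_sym hc hψc hψ (good_phia hφc hC hc hφ b) hg]
  have e2 : ∫ v in Set.Ioi t,
        ((AA φ ψ t)^[m] fun u => φ (u + a)) v * Pop ψ t (fun u => φ (u + b)) v
      = ∫ v in Set.Ioi t,
          Pop ψ t (fun u => φ (u + b)) v * ((AA φ ψ t)^[m] fun u => φ (u + a)) v := by
    refine integral_congr_ae (Filter.Eventually.of_forall fun v => ?_)
    show ((AA φ ψ t)^[m] fun u => φ (u + a)) v * Pop ψ t (fun u => φ (u + b)) v
      = Pop ψ t (fun u => φ (u + b)) v * ((AA φ ψ t)^[m] fun u => φ (u + a)) v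
    ring
  rw [e2, claim hφc hψc hC hc hφ hψ m (fun u => φ (u + b)) (good_phia hφc hC hc hφ b) a]

lemma jointMeas (hφc : Continuous φ) (hψc : Continuous ψ) : ∀ k : ℕ,
    Measurable fun p : ℝ × ℝ => (AA φ ψ t)^[k] (fun u => φ (u + p.1)) p.2 := by
  intro k
  induction k with
  | zero =>
    simp only [Function.iterate_zero_apply]
    exact hφc.measurable.comp (measurable_snd.add measurable_fst)
  | succ k ih =>
    have h : StronglyMeasurable fun q : (ℝ × ℝ) × ℝ =>
        K0 φ ψ q.1.2 q.2 * (AA φ ψ t)^[k] (fun u => φ (u + q.1.1)) q.2 := by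
      refine Measurable.stronglyMeasurable ?_
      refine Measurable.mul ?_ ?_
      · exact (K0_meas hφc hψc).comp ((measurable_fst.snd).prodMk measurable_snd)
      · exact ih.comp ((measurable_fst.fst).prodMk measurable_snd)
    have h2 := (h.integral_prod_right' (ν := volume.restrict (Set.Ioi t))).measurable
    have e : (fun p : ℝ × ℝ => (AA φ ψ t)^[k+1] (fun u => φ (u + p.1)) p.2)
        = fun p : ℝ × ℝ => ∫ s in Set.Ioi t,
            K0 φ ψ p.2 s * (AA φ ψ t)^[k] (fun u => φ (u + p.1)) s := by
      funext p; rw [Function.iterate_succ_apply']; rfl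
    rw [e]; exact h2

/-- The `y`-dependent coefficient controlling all iterates. -/
def Hf (φ : ℝ → ℝ) (c t : ℝ) : ℝ → ℝ :=
  fun y => ∫ r in Set.Ioi t, Real.exp (-c*r) * |φ (r + y)|

lemma Hf_nonneg (y : ℝ) : 0 ≤ Hf φ c t y :=
  setIntegral_nonneg measurableSet_Ioi fun r _ => mul_nonneg (Real.exp_nonneg _) (abs_nonneg _)

lemma Hf_int (hc : 0 < c) (hφc : Continuous φ) (hφ1 : Integrable φ) :
    Integrable (Hf φ c t) := by
  have hmeas : AEStronglyMeasurable (fun q : ℝ × ℝ => Real.exp (-c*q.1) * |φ (q.1 + q.2)|)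
      ((volume.restrict (Set.Ioi t)).prod volume) := by
    refine Measurable.aestronglyMeasurable ?_
    exact ((Real.measurable_exp.comp (measurable_fst.const_mul (-c))).mul
      ((hφc.measurable.comp (measurable_fst.add measurable_snd)).abs))
  have key : Integrable (fun q : ℝ × ℝ => Real.exp (-c*q.1) * |φ (q.1 + q.2)|)
      ((volume.restrict (Set.Ioi t)).prod volume) := by
    rw [integrable_prod_iff hmeas]
    constructor
    · refine Filter.Eventually.of_forall fun r => ?_
      simpa using ((hφ1.comp_add_left r).abs).const_mul (Real.exp (-c*r))
    · have e : (fun r => ∫ y, ‖Real.exp (-c*r) * |φ (r + y)|‖)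
          = fun r => (∫ y, |φ y|) * Real.exp (-c*r) := by
        funext r
        have h1 : ∀ y : ℝ, ‖Real.exp (-c*r) * |φ (r + y)|‖ = Real.exp (-c*r) * |φ (r + y)| :=
          fun y => by
            rw [Real.norm_eq_abs, abs_of_nonneg (mul_nonneg (Real.exp_nonneg _) (abs_nonneg _))]
        rw [integral_congr_ae (Filter.Eventually.of_forall h1), integral_const_mul,
          integral_add_left_eq_self (fun y => |φ y|) r]
        ring
      rw [e]
      exact (intE hc t).const_mul _
  exact key.integral_prod_right

lemma Gbound (hφc : Continuous φ) (hψc : Continuous ψ) (hC : 0 < C) (hc : 0 < c)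
    (hφ : ∀ x : ℝ, |φ x| ≤ C * Real.exp (-c * x))
    (hψ : ∀ x : ℝ, |ψ x| ≤ C * Real.exp (-c * x)) :
    ∀ k : ℕ, ∃ M, 0 ≤ M ∧ ∀ y s : ℝ,
      |(AA φ ψ t)^[k+1] (fun u => φ (u + y)) s| ≤ M * Hf φ c t y * Real.exp (-c*s) := by
  obtain ⟨κ, hκ0, hκ⟩ := K0_bound hC hc hφ hψ
  intro k
  induction k with
  | zero =>
    refine ⟨κ, hκ0, fun y s => ?_⟩
    have h1 := AA_le hκ hκ0 ((good_phia hφc hC hc hφ y).exp_abs_int hc t) s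
    simp only [zero_add, Function.iterate_one]
    exact h1
  | succ k ih =>
    obtain ⟨M, hM0, hM⟩ := ih
    set E2 := ∫ r in Set.Ioi t, Real.exp (-c*r) * Real.exp (-c*r) with hE2
    have hE20 : 0 ≤ E2 := setIntegral_nonneg measurableSet_Ioi fun r _ =>
      mul_nonneg (Real.exp_nonneg _) (Real.exp_nonneg _)
    refine ⟨κ * (E2 * M), mul_nonneg hκ0 (mul_nonneg hE20 hM0), fun y s => ?_⟩
    have hH0 : 0 ≤ Hf φ c t y := Hf_nonneg y
    have hgood : Good c ((AA φ ψ t)^[k+1] fun u => φ (u + y)) :=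
      Good.iter hφc hψc hC hc hφ hψ (good_phia hφc hC hc hφ y) (k+1)
    have h1 := AA_le hκ hκ0 (hgood.exp_abs_int hc t) s
    rw [Function.iterate_succ_apply' (AA φ ψ t) (k+1)]
    refine h1.trans ?_
    have hJ : (∫ r in Set.Ioi t,
          Real.exp (-c*r) * |(AA φ ψ t)^[k+1] (fun u => φ (u + y)) r|)
        ≤ M * Hf φ c t y * E2 := by
      have hb : ∀ r : ℝ, Real.exp (-c*r) * |(AA φ ψ t)^[k+1] (fun u => φ (u + y)) r|
          ≤ (M * Hf φ c t y) * (Real.exp (-c*r) * Real.exp (-c*r)) := fun r => by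
        calc Real.exp (-c*r) * |(AA φ ψ t)^[k+1] (fun u => φ (u + y)) r|
            ≤ Real.exp (-c*r) * (M * Hf φ c t y * Real.exp (-c*r)) :=
              mul_le_mul_of_nonneg_left (hM y r) (Real.exp_nonneg _)
          _ = (M * Hf φ c t y) * (Real.exp (-c*r) * Real.exp (-c*r)) := by ring
      calc (∫ r in Set.Ioi t,
            Real.exp (-c*r) * |(AA φ ψ t)^[k+1] (fun u => φ (u + y)) r|)
          ≤ ∫ r in Set.Ioi t, (M * Hf φ c t y) * (Real.exp (-c*r) * Real.exp (-c*r)) :=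
            integral_mono_of_nonneg
              (Filter.Eventually.of_forall fun r =>
                mul_nonneg (Real.exp_nonneg _) (abs_nonneg _))
              ((intEE hc t).const_mul _) (Filter.Eventually.of_forall hb)
        _ = M * Hf φ c t y * E2 := by rw [integral_const_mul]
    calc (κ * ∫ r in Set.Ioi t,
          Real.exp (-c*r) * |(AA φ ψ t)^[k+1] (fun u => φ (u + y)) r|) * Real.exp (-c*s)
        ≤ (κ * (M * Hf φ c t y * E2)) * Real.exp (-c*s) :=
          mul_le_mul_of_nonneg_right (mul_le_mul_of_nonneg_left hJ hκ0) (Real.exp_nonneg _)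
      _ = (κ * (E2 * M)) * Hf φ c t y * Real.exp (-c*s) := by ring

lemma stepA (hφc : Continuous φ) (hψc : Continuous ψ) (hC : 0 < C) (hc : 0 < c)
    (hφ : ∀ x : ℝ, |φ x| ≤ C * Real.exp (-c * x))
    (hψ : ∀ x : ℝ, |ψ x| ≤ C * Real.exp (-c * x))
    (hφ1 : Integrable φ)
    (I : Set ℝ) (Φ : ℝ → ℝ) (hΦ : ∀ x : ℝ, Φ x = ∫ y in I, φ (x + y)) :
    ∀ k : ℕ, ∀ x : ℝ,
      (AA φ ψ t)^[k+1] Φ x = ∫ y in I, (AA φ ψ t)^[k+1] (fun u => φ (u + y)) x := by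
  obtain ⟨κ, hκ0, hκ⟩ := K0_bound hC hc hφ hψ
  intro k
  induction k with
  | zero =>
    intro x
    simp only [zero_add, Function.iterate_one]
    have e1 : AA φ ψ t Φ x
        = ∫ s in Set.Ioi t, ∫ y in I, K0 φ ψ x s * φ (s + y) := by
      refine integral_congr_ae (Filter.Eventually.of_forall fun s => ?_)
      show K0 φ ψ x s * Φ s = _
      rw [hΦ s]
      exact (integral_const_mul _ _).symm
    have hInt : Integrable (Function.uncurry fun s y => K0 φ ψ x s * φ (s + y))
        ((volume.restrict (Set.Ioi t)).prod (volume.restrict I)) := by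
      have hmeas : AEStronglyMeasurable (Function.uncurry fun s y => K0 φ ψ x s * φ (s + y))
          ((volume.restrict (Set.Ioi t)).prod (volume.restrict I)) := by
        refine Measurable.aestronglyMeasurable ?_
        exact (((K0_meas hφc hψc).comp (measurable_const.prodMk measurable_fst)).mul
          (hφc.measurable.comp (measurable_fst.add measurable_snd)))
      rw [integrable_prod_iff hmeas]
      constructor
      · refine Filter.Eventually.of_forall fun s => ?_
        exact ((hφ1.comp_add_left s).const_mul (K0 φ ψ x s)).integrableOn
      · refine ((intE hc t).const_mul ((κ * Real.exp (-c*x)) * ∫ z, |φ z|)).mono' ?_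
          (Filter.Eventually.of_forall fun s => ?_)
        · have hsm : StronglyMeasurable fun q : ℝ × ℝ =>
              ‖Function.uncurry (fun s y => K0 φ ψ x s * φ (s + y)) q‖ := by
            refine Measurable.stronglyMeasurable ?_
            exact (((K0_meas hφc hψc).comp (measurable_const.prodMk measurable_fst)).mul
              (hφc.measurable.comp (measurable_fst.add measurable_snd))).norm
          exact (hsm.integral_prod_right' (ν := volume.restrict I)).aestronglyMeasurable
        · have hnn : 0 ≤ ∫ y in I, ‖K0 φ ψ x s * φ (s + y)‖ :=
            integral_nonneg fun y => norm_nonneg _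
          show ‖∫ y in I, ‖K0 φ ψ x s * φ (s + y)‖‖ ≤
            ((κ * Real.exp (-c*x)) * ∫ z, |φ z|) * Real.exp (-c*s)
          rw [Real.norm_eq_abs, abs_of_nonneg hnn]
          have e2 : (∫ y in I, ‖K0 φ ψ x s * φ (s + y)‖)
              = |K0 φ ψ x s| * ∫ y in I, |φ (s + y)| := by
            rw [← integral_const_mul]
            refine integral_congr_ae (Filter.Eventually.of_forall fun y => ?_)
            show ‖K0 φ ψ x s * φ (s + y)‖ = |K0 φ ψ x s| * |φ (s + y)|
            rw [norm_mul, Real.norm_eq_abs, Real.norm_eq_abs]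
          rw [e2]
          have h3 : (∫ y in I, |φ (s + y)|) ≤ ∫ z, |φ z| := by
            have h4 : (∫ y in I, |φ (s + y)|) ≤ ∫ y, |φ (s + y)| :=
              setIntegral_le_integral ((hφ1.comp_add_left s).abs)
                (Filter.Eventually.of_forall fun y => abs_nonneg _)
            have h5 : (∫ y, |φ (s + y)|) = ∫ z, |φ z| :=
              integral_add_left_eq_self (fun z => |φ z|) s
            exact h4.trans (le_of_eq h5)
          calc |K0 φ ψ x s| * ∫ y in I, |φ (s + y)|
              ≤ (κ * (Real.exp (-c*x) * Real.exp (-c*s))) * ∫ z, |φ z| :=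
                mul_le_mul (hκ x s) h3 (integral_nonneg fun y => abs_nonneg _)
                  (mul_nonneg hκ0 (by positivity))
            _ = ((κ * Real.exp (-c*x)) * ∫ z, |φ z|) * Real.exp (-c*s) := by ring
    rw [e1, integral_integral_swap hInt]
    rfl
  | succ k ih =>
    intro x
    obtain ⟨M, hM0, hMb⟩ := Gbound hφc hψc hC hc hφ hψ k
    have e1 : (AA φ ψ t)^[k+1+1] Φ x
        = ∫ s in Set.Ioi t, ∫ y in I,
            K0 φ ψ x s * (AA φ ψ t)^[k+1] (fun u => φ (u + y)) s := by
      rw [Function.iterate_succ_apply']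
      refine integral_congr_ae (Filter.Eventually.of_forall fun s => ?_)
      show K0 φ ψ x s * (AA φ ψ t)^[k+1] Φ s = _
      rw [ih s]
      exact (integral_const_mul _ _).symm
    have hInt : Integrable
        (Function.uncurry fun s y => K0 φ ψ x s * (AA φ ψ t)^[k+1] (fun u => φ (u + y)) s)
        ((volume.restrict (Set.Ioi t)).prod (volume.restrict I)) := by
      refine prod_dominated ?_
        (f1 := fun s => (κ * Real.exp (-c*x) * M) * (Real.exp (-c*s) * Real.exp (-c*s)))
        (f2 := Hf φ c t)
        ?_ ((Hf_int hc hφc hφ1).integrableOn) ?_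
      · refine Measurable.aestronglyMeasurable ?_
        exact (((K0_meas hφc hψc).comp (measurable_const.prodMk measurable_fst)).mul
          ((jointMeas hφc hψc (k+1)).comp (measurable_snd.prodMk measurable_fst)))
      · exact (intEE hc t).const_mul _
      · rintro ⟨s, y⟩
        show ‖K0 φ ψ x s * (AA φ ψ t)^[k+1] (fun u => φ (u + y)) s‖ ≤ _
        rw [norm_mul, Real.norm_eq_abs, Real.norm_eq_abs]
        calc |K0 φ ψ x s| * |(AA φ ψ t)^[k+1] (fun u => φ (u + y)) s|
            ≤ (κ * (Real.exp (-c*x) * Real.exp (-c*s))) *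
                (M * Hf φ c t y * Real.exp (-c*s)) :=
              mul_le_mul (hκ x s) (hMb y s) (abs_nonneg _)
                (mul_nonneg hκ0 (by positivity))
          _ = ((κ * Real.exp (-c*x) * M) * (Real.exp (-c*s) * Real.exp (-c*s))) *
                Hf φ c t y := by ring
    rw [e1, integral_integral_swap hInt]
    refine integral_congr_ae (Filter.Eventually.of_forall fun y => ?_)
    show (∫ s in Set.Ioi t, K0 φ ψ x s * (AA φ ψ t)^[k+1] (fun u => φ (u + y)) s)
      = (AA φ ψ t)^[k+1+1] (fun u => φ (u + y)) x
    conv_rhs => rw [Function.iterate_succ_apply']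
    rfl

end IterPerm

/-- permuting the iterated operator and the integration over `I`:
`(A_t^k Φ)(x) = ∫_I (A_t^k φ_{x−t})(t+y) dy` where `Φ(x) = ∫_I φ(x+y) dy`. -/
theorem iterate_integral_permutation (φ ψ : ℝ → ℝ) (hφc : Continuous φ) (hψc : Continuous ψ)
    (C c : ℝ) (hC : 0 < C) (hc : 0 < c)
    (hφ : ∀ x : ℝ, |φ x| ≤ C * Real.exp (-c * x))
    (hψ : ∀ x : ℝ, |ψ x| ≤ C * Real.exp (-c * x))
    (hφ1 : Integrable φ)
    (K : ℝ → ℝ → ℝ)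
    (hK : ∀ x y : ℝ, K x y = ∫ s in Set.Ioi (0 : ℝ), φ (x + s) * ψ (y + s))
    (A : ℝ → (ℝ → ℝ) → (ℝ → ℝ))
    (hA : ∀ (t : ℝ) (f : ℝ → ℝ) (x : ℝ), A t f x = ∫ s in Set.Ioi t, K x s * f s)
    (I : Set ℝ) (hI : MeasurableSet I)
    (Φ : ℝ → ℝ) (hΦ : ∀ x : ℝ, Φ x = ∫ y in I, φ (x + y))
    (k : ℕ) (hk : 1 ≤ k) (x t : ℝ) :
    (A t)^[k] Φ x = ∫ y in I, (A t)^[k] (fun u => φ (u + (x - t))) (t + y) := by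
  have hAt : A t = IterPerm.AA φ ψ t := by
    funext f z
    rw [hA]
    refine integral_congr_ae (Filter.Eventually.of_forall fun s => ?_)
    show K z s * f s = IterPerm.K0 φ ψ z s * f s
    rw [hK]
    rfl
  obtain ⟨m, rfl⟩ : ∃ m, k = m + 1 := ⟨k - 1, (Nat.succ_pred_eq_of_pos hk).symm⟩
  rw [hAt, IterPerm.stepA hφc hψc hC hc hφ hψ hφ1 I Φ hΦ m x]
  refine integral_congr_ae (Filter.Eventually.of_forall fun y => ?_)
  show (IterPerm.AA φ ψ t)^[m+1] (fun u => φ (u + y)) x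
    = (IterPerm.AA φ ψ t)^[m+1] (fun u => φ (u + (x - t))) (t + y)
  have h := IterPerm.sym (t := t) hφc hψc hC hc hφ hψ (m+1) (Nat.le_add_left 1 m) y (x - t)
  rw [show t + (x - t) = x by ring] at h
  exact h
end
end

section
/- Let t < 0, γ ∈ (0,1), set δ := min( √(−ln γ)/|t| , 1/2 ), and define θ₊(z) := (1/4)(z² − 4iz) for z ∈ ℂ. Then for every λ ∈ [−1, 1], with z := λ + iδ, the following two inequalities hold: (i) |exp(−t² θ₊(z))| ≤ γ^{-1/4} e^{-t²δ} e^{-t²λ²/4}; and (ii) |1 − γ exp(−t² z²/2)| ≥ 1 − √γ. -/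
/-- pointwise bounds on the collapsing contour `Im z = δ`,
`δ = min(√(−ln γ)/|t|, 1/2)`, for `θ₊(z) = (z² − 4iz)/4`. -/
theorem collapsing_contour_bounds (t γ : ℝ) (ht : t < 0) (hγ : γ ∈ Set.Ioo (0 : ℝ) 1)
    (δ : ℝ) (hδ : δ = min (Real.sqrt (-Real.log γ) / |t|) (1 / 2))
    (θ : ℂ → ℂ) (hθ : ∀ z : ℂ, θ z = (1 / 4) * (z ^ 2 - 4 * Complex.I * z))
    (lam : ℝ) (hlam : lam ∈ Set.Icc (-1 : ℝ) 1) :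
    ‖Complex.exp (-(t : ℂ) ^ 2 * θ ((lam : ℂ) + (δ : ℂ) * Complex.I))‖ ≤
      γ ^ (-(1 : ℝ) / 4) * Real.exp (-t ^ 2 * δ) * Real.exp (-t ^ 2 * lam ^ 2 / 4) ∧
    1 - Real.sqrt γ ≤
      ‖1 - (γ : ℂ) *
          Complex.exp (-(t : ℂ) ^ 2 * ((lam : ℂ) + (δ : ℂ) * Complex.I) ^ 2 / 2)‖ := by
  obtain ⟨hγ0, hγ1⟩ := hγ
  have ht0 : t ≠ 0 := ne_of_lt ht
  have habs : 0 < |t| := abs_pos.mpr ht0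
  have hlog : 0 ≤ -Real.log γ := by
    have := Real.log_neg hγ0 hγ1; linarith
  have hδle : δ ≤ Real.sqrt (-Real.log γ) / |t| := hδ ▸ min_le_left _ _
  have hδ0 : 0 ≤ δ := by
    rw [hδ]
    exact le_min (by positivity) (by norm_num)
  have h2 : |t| * δ ≤ Real.sqrt (-Real.log γ) := by
    rw [mul_comm]
    exact (le_div_iff₀ habs).mp hδle
  have h1 : t ^ 2 * δ ^ 2 ≤ -Real.log γ := by
    calc t ^ 2 * δ ^ 2 = (|t| * δ) ^ 2 := by rw [mul_pow, sq_abs]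
      _ ≤ Real.sqrt (-Real.log γ) ^ 2 :=
          pow_le_pow_left₀ (by positivity) h2 2
      _ = -Real.log γ := Real.sq_sqrt hlog
  constructor
  · rw [hθ, Complex.norm_exp]
    have hre : (-(t : ℂ) ^ 2 * ((1 / 4) * (((lam : ℂ) + (δ : ℂ) * Complex.I) ^ 2 -
        4 * Complex.I * ((lam : ℂ) + (δ : ℂ) * Complex.I)))).re
        = -t ^ 2 * lam ^ 2 / 4 + t ^ 2 * δ ^ 2 / 4 - t ^ 2 * δ := by
      simp [Complex.mul_re, Complex.mul_im, Complex.add_re, Complex.add_im,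
        Complex.sub_re, Complex.sub_im, Complex.I_re, Complex.I_im, pow_two]
      ring
    rw [hre, Real.rpow_def_of_pos hγ0, ← Real.exp_add, ← Real.exp_add, Real.exp_le_exp]
    nlinarith [h1]
  · have hre2 : (-(t : ℂ) ^ 2 * ((lam : ℂ) + (δ : ℂ) * Complex.I) ^ 2 / 2).re
        = -t ^ 2 * lam ^ 2 / 2 + t ^ 2 * δ ^ 2 / 2 := by
      simp [Complex.div_re, Complex.mul_re, Complex.mul_im, Complex.add_re, Complex.add_im,
        Complex.I_re, Complex.I_im, pow_two]
      ring
    have key : ‖(γ : ℂ) * Complex.exp (-(t : ℂ) ^ 2 *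
        ((lam : ℂ) + (δ : ℂ) * Complex.I) ^ 2 / 2)‖ ≤ Real.sqrt γ := by
      rw [norm_mul, Complex.norm_exp, hre2,
        Complex.norm_real, Real.norm_eq_abs, abs_of_pos hγ0]
      have hγexp : γ = Real.exp (Real.log γ) := (Real.exp_log hγ0).symm
      have hsq : Real.sqrt γ = Real.exp (Real.log γ / 2) := by
        rw [Real.sqrt_eq_rpow, Real.rpow_def_of_pos hγ0]
        ring_nf
      rw [hsq]
      calc γ * Real.exp (-t ^ 2 * lam ^ 2 / 2 + t ^ 2 * δ ^ 2 / 2)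
          = Real.exp (Real.log γ + (-t ^ 2 * lam ^ 2 / 2 + t ^ 2 * δ ^ 2 / 2)) := by
            rw [Real.exp_add, Real.exp_add, ← hγexp]; rw [Real.exp_add]
        _ ≤ Real.exp (Real.log γ / 2) := by
            rw [Real.exp_le_exp]
            nlinarith [h1, sq_nonneg (t * lam)]
      done
    calc 1 - Real.sqrt γ ≤ ‖(1 : ℂ)‖ - ‖(γ : ℂ) * Complex.exp (-(t : ℂ) ^ 2 *
          ((lam : ℂ) + (δ : ℂ) * Complex.I) ^ 2 / 2)‖ := by
          rw [norm_one]; linarith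
      _ ≤ _ := norm_sub_norm_le _ _
end
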